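/- arXiv:2209.14715 — 12 statements merged into one kernel-verified Lean document; each statement's English description precedes it below -/
import Mathlib

section
/- Let γ, F₁, F₂, F₃, F₄ : ℝ → ℝ⁴ together with k₁, k₂, k₃ : ℝ → ℝ be a pseudo null Frenet apparatus in E₁⁴, let r : ℝ → ℝ be a smooth function with r(s) > 0 for all s, and let a₁, a₂, a₃, a₄ : ℝ³ → ℝ be functions differentiable in the first variable. Define C(s,t,w) = γ(s) + a₁(s,t,w)F₁(s) + a₂(s,t,w)F₂(s) + a₃(s,t,w)F₃(s) + a₄(s,t,w)F₄(s). If for all (s,t,w) one has ⟨C(s,t,w) − γ(s), C(s,t,w) − γ(s)⟩ = r(s)² and ⟨C(s,t,w) − γ(s), ∂C/∂s(s,t,w)⟩ = 0, then for all (s,t,w): a₁(s,t,w) = −r(s)r′(s) and a₃(s,t,w)² + 2a₂(s,t,w)a₄(s,t,w) = r(s)²(1 − r′(s)²). -/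
/-- The Minkowski inner product on `E₁⁴ = ℝ⁴`:
`⟨u,v⟩ = -u₁v₁ + u₂v₂ + u₃v₃ + u₄v₄`. -/
noncomputable def mink (u v : Fin 4 → ℝ) : ℝ :=
  -(u 0 * v 0) + u 1 * v 1 + u 2 * v 2 + u 3 * v 3

lemma mink_expand (F₁ F₂ F₃ F₄ : Fin 4 → ℝ)
    (h11 : mink F₁ F₁ = 1) (h33 : mink F₃ F₃ = 1) (h22 : mink F₂ F₂ = 0)
    (h44 : mink F₄ F₄ = 0) (h24 : mink F₂ F₄ = 1) (h12 : mink F₁ F₂ = 0)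
    (h13 : mink F₁ F₃ = 0) (h14 : mink F₁ F₄ = 0) (h23 : mink F₂ F₃ = 0)
    (h34 : mink F₃ F₄ = 0) (a b c d a' b' c' d' : ℝ) :
    mink (a • F₁ + b • F₂ + c • F₃ + d • F₄) (a' • F₁ + b' • F₂ + c' • F₃ + d' • F₄)
      = a * a' + c * c' + b * d' + d * b' := by
  simp only [mink, Pi.add_apply, Pi.smul_apply, smul_eq_mul] at *
  linear_combination a*a'*h11 + c*c'*h33 + b*b'*h22 + d*d'*h44
    + (b*d'+d*b')*h24 + (a*b'+b*a')*h12 + (a*c'+c*a')*h13 + (a*d'+d*a')*h14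
    + (b*c'+c*b')*h23 + (c*d'+d*c')*h34

/-- Canal hypersurfaces (envelopes of pseudo hyperspheres) over a pseudo null curve:
the coefficients satisfy `a₁ = -r r'` and `a₃² + 2a₂a₄ = r²(1 - r'²)`. -/
theorem pseudoNull_canal_sphere_coefficients
    (γ F₁ F₂ F₃ F₄ : ℝ → Fin 4 → ℝ) (k₁ k₂ k₃ : ℝ → ℝ)
    (hγ : ContDiff ℝ (⊤ : ℕ∞) γ) (hF₁ : ContDiff ℝ (⊤ : ℕ∞) F₁) (hF₂ : ContDiff ℝ (⊤ : ℕ∞) F₂)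
    (hF₃ : ContDiff ℝ (⊤ : ℕ∞) F₃) (hF₄ : ContDiff ℝ (⊤ : ℕ∞) F₄)
    (hk₁ : ContDiff ℝ (⊤ : ℕ∞) k₁) (hk₂ : ContDiff ℝ (⊤ : ℕ∞) k₂) (hk₃ : ContDiff ℝ (⊤ : ℕ∞) k₃)
    (hγ' : ∀ s, deriv γ s = F₁ s)
    (hF₁' : ∀ s, deriv F₁ s = k₁ s • F₂ s)
    (hF₂' : ∀ s, deriv F₂ s = k₂ s • F₃ s)
    (hF₃' : ∀ s, deriv F₃ s = k₃ s • F₂ s - k₂ s • F₄ s)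
    (hF₄' : ∀ s, deriv F₄ s = -(k₁ s • F₁ s) - k₃ s • F₃ s)
    (h11 : ∀ s, mink (F₁ s) (F₁ s) = 1)
    (h33 : ∀ s, mink (F₃ s) (F₃ s) = 1)
    (h22 : ∀ s, mink (F₂ s) (F₂ s) = 0)
    (h44 : ∀ s, mink (F₄ s) (F₄ s) = 0)
    (h24 : ∀ s, mink (F₂ s) (F₄ s) = 1)
    (h12 : ∀ s, mink (F₁ s) (F₂ s) = 0)
    (h13 : ∀ s, mink (F₁ s) (F₃ s) = 0)
    (h14 : ∀ s, mink (F₁ s) (F₄ s) = 0)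
    (h23 : ∀ s, mink (F₂ s) (F₃ s) = 0)
    (h34 : ∀ s, mink (F₃ s) (F₄ s) = 0)
    (r : ℝ → ℝ) (hr : ContDiff ℝ (⊤ : ℕ∞) r) (hrpos : ∀ s, 0 < r s)
    (a₁ a₂ a₃ a₄ : ℝ → ℝ → ℝ → ℝ)
    (ha₁ : ∀ t w, Differentiable ℝ (fun s => a₁ s t w))
    (ha₂ : ∀ t w, Differentiable ℝ (fun s => a₂ s t w))
    (ha₃ : ∀ t w, Differentiable ℝ (fun s => a₃ s t w))
    (ha₄ : ∀ t w, Differentiable ℝ (fun s => a₄ s t w))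
    (C : ℝ → ℝ → ℝ → Fin 4 → ℝ)
    (hC : ∀ s t w, C s t w =
      γ s + a₁ s t w • F₁ s + a₂ s t w • F₂ s + a₃ s t w • F₃ s + a₄ s t w • F₄ s)
    (hsphere : ∀ s t w, mink (C s t w - γ s) (C s t w - γ s) = (r s) ^ 2)
    (horth : ∀ s t w, mink (C s t w - γ s) (deriv (fun x => C x t w) s) = 0) :
    ∀ s t w, a₁ s t w = -(r s * deriv r s) ∧
      (a₃ s t w) ^ 2 + 2 * a₂ s t w * a₄ s t w = (r s) ^ 2 * (1 - (deriv r s) ^ 2) := by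
  intro s t w
  set A₁ := a₁ s t w
  set A₂ := a₂ s t w
  set A₃ := a₃ s t w
  set A₄ := a₄ s t w
  set d₁ := deriv (fun x => a₁ x t w) s
  set d₂ := deriv (fun x => a₂ x t w) s
  set d₃ := deriv (fun x => a₃ x t w) s
  set d₄ := deriv (fun x => a₄ x t w) s
  -- difference vector
  have hD : ∀ x, C x t w - γ x =
      a₁ x t w • F₁ x + a₂ x t w • F₂ x + a₃ x t w • F₃ x + a₄ x t w • F₄ x := by
    intro x; rw [hC x t w]; abel
  -- sphere condition in coefficients
  have hsph : ∀ x, a₁ x t w ^ 2 + a₃ x t w ^ 2 + 2 * (a₂ x t w * a₄ x t w) = r x ^ 2 := by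
    intro x
    have h := hsphere x t w
    rw [hD x, mink_expand _ _ _ _ (h11 x) (h33 x) (h22 x) (h44 x) (h24 x) (h12 x)
      (h13 x) (h14 x) (h23 x) (h34 x)] at h
    ring_nf at h ⊢
    linarith
  -- derivatives of coefficients
  have hA₁ : HasDerivAt (fun x => a₁ x t w) d₁ s := ((ha₁ t w) s).hasDerivAt
  have hA₂ : HasDerivAt (fun x => a₂ x t w) d₂ s := ((ha₂ t w) s).hasDerivAt
  have hA₃ : HasDerivAt (fun x => a₃ x t w) d₃ s := ((ha₃ t w) s).hasDerivAt
  have hA₄ : HasDerivAt (fun x => a₄ x t w) d₄ s := ((ha₄ t w) s).hasDerivAt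
  -- derivatives of frame
  have hγd : HasDerivAt γ (F₁ s) s := by
    have := (hγ.differentiable (by simp) s).hasDerivAt
    rwa [hγ' s] at this
  have hF₁d : HasDerivAt F₁ (k₁ s • F₂ s) s := by
    have := (hF₁.differentiable (by simp) s).hasDerivAt
    rwa [hF₁' s] at this
  have hF₂d : HasDerivAt F₂ (k₂ s • F₃ s) s := by
    have := (hF₂.differentiable (by simp) s).hasDerivAt
    rwa [hF₂' s] at this
  have hF₃d : HasDerivAt F₃ (k₃ s • F₂ s - k₂ s • F₄ s) s := by
    have := (hF₃.differentiable (by simp) s).hasDerivAt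
    rwa [hF₃' s] at this
  have hF₄d : HasDerivAt F₄ (-(k₁ s • F₁ s) - k₃ s • F₃ s) s := by
    have := (hF₄.differentiable (by simp) s).hasDerivAt
    rwa [hF₄' s] at this
  -- derivative of C in s
  have hCd : HasDerivAt (fun x => C x t w)
      (F₁ s + (A₁ • (k₁ s • F₂ s) + d₁ • F₁ s)
        + (A₂ • (k₂ s • F₃ s) + d₂ • F₂ s)
        + (A₃ • (k₃ s • F₂ s - k₂ s • F₄ s) + d₃ • F₃ s)
        + (A₄ • (-(k₁ s • F₁ s) - k₃ s • F₃ s) + d₄ • F₄ s)) s := by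
    have hfun : (fun x => C x t w) = fun x =>
        γ x + a₁ x t w • F₁ x + a₂ x t w • F₂ x + a₃ x t w • F₃ x + a₄ x t w • F₄ x :=
      funext fun x => hC x t w
    rw [hfun]
    exact (((hγd.add (hA₁.smul hF₁d)).add (hA₂.smul hF₂d)).add
      (hA₃.smul hF₃d)).add (hA₄.smul hF₄d)
  have hderivC : deriv (fun x => C x t w) s =
      (1 + d₁ - k₁ s * A₄) • F₁ s + (k₁ s * A₁ + d₂ + k₃ s * A₃) • F₂ s
        + (k₂ s * A₂ + d₃ - k₃ s * A₄) • F₃ s + (d₄ - k₂ s * A₃) • F₄ s := by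
    rw [hCd.deriv]; module
  -- orthogonality condition in coefficients
  have horthc : A₁ * (1 + d₁ - k₁ s * A₄) + A₃ * (k₂ s * A₂ + d₃ - k₃ s * A₄)
      + A₂ * (d₄ - k₂ s * A₃) + A₄ * (k₁ s * A₁ + d₂ + k₃ s * A₃) = 0 := by
    have h := horth s t w
    rw [hD s, hderivC, mink_expand _ _ _ _ (h11 s) (h33 s) (h22 s) (h44 s) (h24 s) (h12 s)
      (h13 s) (h14 s) (h23 s) (h34 s)] at h
    linarith [h]
  -- differentiate the sphere identity
  have hL : HasDerivAt (fun x => a₁ x t w ^ 2 + a₃ x t w ^ 2 + 2 * (a₂ x t w * a₄ x t w))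
      ((2 : ℕ) * A₁ ^ 1 * d₁ + (2 : ℕ) * A₃ ^ 1 * d₃ + 2 * (d₂ * A₄ + A₂ * d₄)) s := by
    exact ((hA₁.pow 2).add (hA₃.pow 2)).add ((hA₂.mul hA₄).const_mul 2)
  have hR : HasDerivAt (fun x => r x ^ 2) ((2 : ℕ) * r s ^ 1 * deriv r s) s :=
    ((hr.differentiable (by simp) s).hasDerivAt).pow 2
  have hLR : (2 : ℕ) * A₁ ^ 1 * d₁ + (2 : ℕ) * A₃ ^ 1 * d₃ + 2 * (d₂ * A₄ + A₂ * d₄)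
      = (2 : ℕ) * r s ^ 1 * deriv r s := by
    have hfun : (fun x => a₁ x t w ^ 2 + a₃ x t w ^ 2 + 2 * (a₂ x t w * a₄ x t w))
        = fun x => r x ^ 2 := funext hsph
    rw [hfun] at hL
    exact hL.unique hR
  push_cast at hLR
  simp only [pow_one] at hLR
  have key : A₁ = -(r s * deriv r s) := by nlinarith [horthc, hLR]
  refine ⟨key, ?_⟩
  have hs := hsph s
  rw [show a₁ s t w = A₁ from rfl, show a₂ s t w = A₂ from rfl,
    show a₃ s t w = A₃ from rfl, show a₄ s t w = A₄ from rfl] at hs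
  linear_combination hs - (A₁ - r s * deriv r s) * key
end

section
/- Let γ, F₁, F₂, F₃, F₄ : ℝ → ℝ⁴ together with k₁, k₂, k₃ : ℝ → ℝ be a pseudo null Frenet apparatus in E₁⁴, let r : ℝ → ℝ be a smooth function with r(s) > 0 for all s, and let a₁, a₂, a₃, a₄ : ℝ³ → ℝ be functions differentiable in the first variable. Define C(s,t,w) = γ(s) + a₁(s,t,w)F₁(s) + a₂(s,t,w)F₂(s) + a₃(s,t,w)F₃(s) + a₄(s,t,w)F₄(s). If for all (s,t,w) one has ⟨C(s,t,w) − γ(s), C(s,t,w) − γ(s)⟩ = −r(s)² and ⟨C(s,t,w) − γ(s), ∂C/∂s(s,t,w)⟩ = 0, then for all (s,t,w): a₁(s,t,w) = r(s)r′(s) and a₃(s,t,w)² + 2a₂(s,t,w)a₄(s,t,w) = −r(s)²(1 + r′(s)²). -/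
lemma mink_comb (u₁ u₂ u₃ u₄ : Fin 4 → ℝ)
    (h11 : mink u₁ u₁ = 1) (h33 : mink u₃ u₃ = 1)
    (h22 : mink u₂ u₂ = 0) (h44 : mink u₄ u₄ = 0)
    (h24 : mink u₂ u₄ = 1)
    (h12 : mink u₁ u₂ = 0) (h13 : mink u₁ u₃ = 0) (h14 : mink u₁ u₄ = 0)
    (h23 : mink u₂ u₃ = 0) (h34 : mink u₃ u₄ = 0)
    (b c d e b' c' d' e' : ℝ) :
    mink (b • u₁ + c • u₂ + d • u₃ + e • u₄) (b' • u₁ + c' • u₂ + d' • u₃ + e' • u₄)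
      = b * b' + d * d' + c * e' + e * c' := by
  simp only [mink, Pi.add_apply, Pi.smul_apply, smul_eq_mul] at *
  linear_combination (b*b')*h11 + (d*d')*h33 + (c*c')*h22 + (e*e')*h44 +
    (c*e'+e*c')*h24 + (b*c'+c*b')*h12 + (b*d'+d*b')*h13 + (b*e'+e*b')*h14 +
    (c*d'+d*c')*h23 + (d*e'+e*d')*h34

/-- Canal hypersurfaces (envelopes of pseudo hyperbolic hyperspheres) over a pseudo null curve:
the coefficients satisfy `a₁ = r r'` and `a₃² + 2a₂a₄ = -r²(1 + r'²)`. -/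
theorem pseudoNull_canal_hyperbolic_coefficients
    (γ F₁ F₂ F₃ F₄ : ℝ → Fin 4 → ℝ) (k₁ k₂ k₃ : ℝ → ℝ)
    (hγ : ContDiff ℝ (⊤ : ℕ∞) γ) (hF₁ : ContDiff ℝ (⊤ : ℕ∞) F₁) (hF₂ : ContDiff ℝ (⊤ : ℕ∞) F₂)
    (hF₃ : ContDiff ℝ (⊤ : ℕ∞) F₃) (hF₄ : ContDiff ℝ (⊤ : ℕ∞) F₄)
    (hk₁ : ContDiff ℝ (⊤ : ℕ∞) k₁) (hk₂ : ContDiff ℝ (⊤ : ℕ∞) k₂) (hk₃ : ContDiff ℝ (⊤ : ℕ∞) k₃)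
    (hγ' : ∀ s, deriv γ s = F₁ s)
    (hF₁' : ∀ s, deriv F₁ s = k₁ s • F₂ s)
    (hF₂' : ∀ s, deriv F₂ s = k₂ s • F₃ s)
    (hF₃' : ∀ s, deriv F₃ s = k₃ s • F₂ s - k₂ s • F₄ s)
    (hF₄' : ∀ s, deriv F₄ s = -(k₁ s • F₁ s) - k₃ s • F₃ s)
    (h11 : ∀ s, mink (F₁ s) (F₁ s) = 1)
    (h33 : ∀ s, mink (F₃ s) (F₃ s) = 1)
    (h22 : ∀ s, mink (F₂ s) (F₂ s) = 0)
    (h44 : ∀ s, mink (F₄ s) (F₄ s) = 0)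
    (h24 : ∀ s, mink (F₂ s) (F₄ s) = 1)
    (h12 : ∀ s, mink (F₁ s) (F₂ s) = 0)
    (h13 : ∀ s, mink (F₁ s) (F₃ s) = 0)
    (h14 : ∀ s, mink (F₁ s) (F₄ s) = 0)
    (h23 : ∀ s, mink (F₂ s) (F₃ s) = 0)
    (h34 : ∀ s, mink (F₃ s) (F₄ s) = 0)
    (r : ℝ → ℝ) (hr : ContDiff ℝ (⊤ : ℕ∞) r) (hrpos : ∀ s, 0 < r s)
    (a₁ a₂ a₃ a₄ : ℝ → ℝ → ℝ → ℝ)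
    (ha₁ : ∀ t w, Differentiable ℝ (fun s => a₁ s t w))
    (ha₂ : ∀ t w, Differentiable ℝ (fun s => a₂ s t w))
    (ha₃ : ∀ t w, Differentiable ℝ (fun s => a₃ s t w))
    (ha₄ : ∀ t w, Differentiable ℝ (fun s => a₄ s t w))
    (C : ℝ → ℝ → ℝ → Fin 4 → ℝ)
    (hC : ∀ s t w, C s t w =
      γ s + a₁ s t w • F₁ s + a₂ s t w • F₂ s + a₃ s t w • F₃ s + a₄ s t w • F₄ s)
    (hsphere : ∀ s t w, mink (C s t w - γ s) (C s t w - γ s) = -((r s) ^ 2))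
    (horth : ∀ s t w, mink (C s t w - γ s) (deriv (fun x => C x t w) s) = 0) :
    ∀ s t w, a₁ s t w = r s * deriv r s ∧
      (a₃ s t w) ^ 2 + 2 * a₂ s t w * a₄ s t w = -((r s) ^ 2 * (1 + (deriv r s) ^ 2)) := by
  intro s t w
  set A₁ : ℝ → ℝ := fun x => a₁ x t w with hA₁def
  set A₂ : ℝ → ℝ := fun x => a₂ x t w with hA₂def
  set A₃ : ℝ → ℝ := fun x => a₃ x t w with hA₃def
  set A₄ : ℝ → ℝ := fun x => a₄ x t w with hA₄def
  have hD : ∀ x, C x t w - γ x =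
      A₁ x • F₁ x + A₂ x • F₂ x + A₃ x • F₃ x + A₄ x • F₄ x := by
    intro x; rw [hC x t w]; abel
  -- the sphere condition, expanded
  have hsph : ∀ x, (A₁ x) ^ 2 + (A₃ x) ^ 2 + 2 * A₂ x * A₄ x = -(r x) ^ 2 := by
    intro x
    have h := hsphere x t w
    rw [hD x, mink_comb _ _ _ _ (h11 x) (h33 x) (h22 x) (h44 x) (h24 x) (h12 x)
      (h13 x) (h14 x) (h23 x) (h34 x)] at h
    nlinarith [h]
  -- derivative data
  have hA1 : HasDerivAt A₁ (deriv A₁ s) s := ((ha₁ t w) s).hasDerivAt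
  have hA2 : HasDerivAt A₂ (deriv A₂ s) s := ((ha₂ t w) s).hasDerivAt
  have hA3 : HasDerivAt A₃ (deriv A₃ s) s := ((ha₃ t w) s).hasDerivAt
  have hA4 : HasDerivAt A₄ (deriv A₄ s) s := ((ha₄ t w) s).hasDerivAt
  set b₁ := deriv A₁ s
  set b₂ := deriv A₂ s
  set b₃ := deriv A₃ s
  set b₄ := deriv A₄ s
  have hrd : HasDerivAt r (deriv r s) s := (hr.differentiable (by simp) s).hasDerivAt
  -- differentiate the sphere identity
  have hL : HasDerivAt (fun x => (A₁ x) ^ 2 + (A₃ x) ^ 2 + 2 * (A₂ x * A₄ x))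
      (2 * A₁ s * b₁ + 2 * A₃ s * b₃ + 2 * (b₂ * A₄ s + A₂ s * b₄)) s := by
    have h1 := hA1.pow 2
    have h3 := hA3.pow 2
    have h24' := ((hA2.mul hA4).const_mul (2:ℝ))
    have h := (h1.add h3).add h24'
    exact h.congr_deriv (by norm_num)
  have hR : HasDerivAt (fun x => -(r x) ^ 2) (-(2 * r s ^ 1 * deriv r s)) s :=
    (hrd.pow 2).neg
  have hfg : (fun x => (A₁ x) ^ 2 + (A₃ x) ^ 2 + 2 * (A₂ x * A₄ x))
      = (fun x => -(r x) ^ 2) := by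
    funext x; have := hsph x; linarith
  rw [hfg] at hL
  have key1 : 2 * A₁ s * b₁ + 2 * A₃ s * b₃ + 2 * (b₂ * A₄ s + A₂ s * b₄)
      = -(2 * r s ^ 1 * deriv r s) := hL.unique hR
  -- derivatives of the frame
  have hF1d : HasDerivAt F₁ (k₁ s • F₂ s) s := by
    have := (hF₁.differentiable (by simp) s).hasDerivAt; rwa [hF₁' s] at this
  have hF2d : HasDerivAt F₂ (k₂ s • F₃ s) s := by
    have := (hF₂.differentiable (by simp) s).hasDerivAt; rwa [hF₂' s] at this
  have hF3d : HasDerivAt F₃ (k₃ s • F₂ s - k₂ s • F₄ s) s := by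
    have := (hF₃.differentiable (by simp) s).hasDerivAt; rwa [hF₃' s] at this
  have hF4d : HasDerivAt F₄ (-(k₁ s • F₁ s) - k₃ s • F₃ s) s := by
    have := (hF₄.differentiable (by simp) s).hasDerivAt; rwa [hF₄' s] at this
  have hγd : HasDerivAt γ (F₁ s) s := by
    have := (hγ.differentiable (by simp) s).hasDerivAt; rwa [hγ' s] at this
  -- derivative of C in s
  have hCeq : (fun x => C x t w) = fun x =>
      γ x + A₁ x • F₁ x + A₂ x • F₂ x + A₃ x • F₃ x + A₄ x • F₄ x := by
    funext x; exact hC x t w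
  have hCd : HasDerivAt (fun x => C x t w)
      (F₁ s + (A₁ s • (k₁ s • F₂ s) + b₁ • F₁ s)
        + (A₂ s • (k₂ s • F₃ s) + b₂ • F₂ s)
        + (A₃ s • (k₃ s • F₂ s - k₂ s • F₄ s) + b₃ • F₃ s)
        + (A₄ s • (-(k₁ s • F₁ s) - k₃ s • F₃ s) + b₄ • F₄ s)) s := by
    rw [hCeq]
    exact (((hγd.add (hA1.smul hF1d)).add (hA2.smul hF2d)).add
      (hA3.smul hF3d)).add (hA4.smul hF4d)
  have hderC := hCd.deriv
  have horth' := horth s t w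
  rw [hderC, hD s] at horth'
  -- express the velocity as a frame combination
  have hV : (F₁ s + (A₁ s • (k₁ s • F₂ s) + b₁ • F₁ s)
        + (A₂ s • (k₂ s • F₃ s) + b₂ • F₂ s)
        + (A₃ s • (k₃ s • F₂ s - k₂ s • F₄ s) + b₃ • F₃ s)
        + (A₄ s • (-(k₁ s • F₁ s) - k₃ s • F₃ s) + b₄ • F₄ s))
      = (1 + b₁ - A₄ s * k₁ s) • F₁ s + (A₁ s * k₁ s + b₂ + A₃ s * k₃ s) • F₂ s
        + (A₂ s * k₂ s + b₃ - A₄ s * k₃ s) • F₃ s + (b₄ - A₃ s * k₂ s) • F₄ s := by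
    funext i
    simp only [Pi.add_apply, Pi.sub_apply, Pi.neg_apply, Pi.smul_apply, smul_eq_mul]
    ring
  rw [hV, mink_comb _ _ _ _ (h11 s) (h33 s) (h22 s) (h44 s) (h24 s) (h12 s)
    (h13 s) (h14 s) (h23 s) (h34 s)] at horth'
  have hfirst : A₁ s = r s * deriv r s := by linear_combination horth' - (1/2 : ℝ) * key1
  refine ⟨hfirst, ?_⟩
  have hsphs := hsph s
  show (A₃ s) ^ 2 + 2 * A₂ s * A₄ s = -((r s) ^ 2 * (1 + (deriv r s) ^ 2))
  linear_combination hsphs - (A₁ s + r s * deriv r s) * hfirst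
end

section
/- Let γ, F₁, F₂, F₃, F₄ : ℝ → ℝ⁴ together with k₁, k₂, k₃ : ℝ → ℝ be a null Frenet apparatus in E₁⁴, let λ ∈ {−1, 1}, let r : ℝ → ℝ be a smooth function with r(s) > 0 for all s, and let a₁, a₂, a₃, a₄ : ℝ³ → ℝ be functions differentiable in the first variable. Define C(s,t,w) = γ(s) + a₁(s,t,w)F₁(s) + a₂(s,t,w)F₂(s) + a₃(s,t,w)F₃(s) + a₄(s,t,w)F₄(s). If for all (s,t,w) one has ⟨C(s,t,w) − γ(s), C(s,t,w) − γ(s)⟩ = λr(s)² and ⟨C(s,t,w) − γ(s), ∂C/∂s(s,t,w)⟩ = 0, then for all (s,t,w): a₃(s,t,w) = −λr(s)r′(s) and a₂(s,t,w)² + a₄(s,t,w)² = λr(s)(r(s) + 2a₁(s,t,w)r′(s)). -/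
lemma mink_comm (u v : Fin 4 → ℝ) : mink u v = mink v u := by simp [mink]; ring

lemma mink_add_left (u v w : Fin 4 → ℝ) : mink (u + v) w = mink u w + mink v w := by
  simp [mink]; ring

lemma mink_add_right (u v w : Fin 4 → ℝ) : mink u (v + w) = mink u v + mink u w := by
  simp [mink]; ring

lemma mink_sub_left (u v w : Fin 4 → ℝ) : mink (u - v) w = mink u w - mink v w := by
  simp [mink]; ring

lemma mink_sub_right (u v w : Fin 4 → ℝ) : mink u (v - w) = mink u v - mink u w := by
  simp [mink]; ring

lemma mink_smul_left (c : ℝ) (u v : Fin 4 → ℝ) : mink (c • u) v = c * mink u v := by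
  simp [mink]; ring

lemma mink_smul_right (c : ℝ) (u v : Fin 4 → ℝ) : mink u (c • v) = c * mink u v := by
  simp [mink]; ring

lemma mink_neg_left (u v : Fin 4 → ℝ) : mink (-u) v = -mink u v := by
  simp [mink]; ring

lemma mink_neg_right (u v : Fin 4 → ℝ) : mink u (-v) = -mink u v := by
  simp [mink]; ring

/-- Canal hypersurfaces over a null center curve: the coefficients satisfy
`a₃ = -λ r r'` and `a₂² + a₄² = λ r (r + 2 a₁ r')`. -/
theorem null_canal_coefficients
    (γ F₁ F₂ F₃ F₄ : ℝ → Fin 4 → ℝ) (k₁ k₂ k₃ : ℝ → ℝ)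
    (hγ : ContDiff ℝ (⊤ : ℕ∞) γ) (hF₁ : ContDiff ℝ (⊤ : ℕ∞) F₁) (hF₂ : ContDiff ℝ (⊤ : ℕ∞) F₂)
    (hF₃ : ContDiff ℝ (⊤ : ℕ∞) F₃) (hF₄ : ContDiff ℝ (⊤ : ℕ∞) F₄)
    (hk₁ : ContDiff ℝ (⊤ : ℕ∞) k₁) (hk₂ : ContDiff ℝ (⊤ : ℕ∞) k₂) (hk₃ : ContDiff ℝ (⊤ : ℕ∞) k₃)
    (hγ' : ∀ s, deriv γ s = F₁ s)
    (hF₁' : ∀ s, deriv F₁ s = k₁ s • F₂ s)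
    (hF₂' : ∀ s, deriv F₂ s = k₂ s • F₁ s - k₁ s • F₃ s)
    (hF₃' : ∀ s, deriv F₃ s = -(k₂ s • F₂ s) + k₃ s • F₄ s)
    (hF₄' : ∀ s, deriv F₄ s = -(k₃ s • F₁ s))
    (h22 : ∀ s, mink (F₂ s) (F₂ s) = 1)
    (h44 : ∀ s, mink (F₄ s) (F₄ s) = 1)
    (h11 : ∀ s, mink (F₁ s) (F₁ s) = 0)
    (h33 : ∀ s, mink (F₃ s) (F₃ s) = 0)
    (h13 : ∀ s, mink (F₁ s) (F₃ s) = 1)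
    (h12 : ∀ s, mink (F₁ s) (F₂ s) = 0)
    (h14 : ∀ s, mink (F₁ s) (F₄ s) = 0)
    (h23 : ∀ s, mink (F₂ s) (F₃ s) = 0)
    (h24 : ∀ s, mink (F₂ s) (F₄ s) = 0)
    (h34 : ∀ s, mink (F₃ s) (F₄ s) = 0)
    (lam : ℝ) (hlam : lam = -1 ∨ lam = 1)
    (r : ℝ → ℝ) (hr : ContDiff ℝ (⊤ : ℕ∞) r) (hrpos : ∀ s, 0 < r s)
    (a₁ a₂ a₃ a₄ : ℝ → ℝ → ℝ → ℝ)
    (ha₁ : ∀ t w, Differentiable ℝ (fun s => a₁ s t w))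
    (ha₂ : ∀ t w, Differentiable ℝ (fun s => a₂ s t w))
    (ha₃ : ∀ t w, Differentiable ℝ (fun s => a₃ s t w))
    (ha₄ : ∀ t w, Differentiable ℝ (fun s => a₄ s t w))
    (C : ℝ → ℝ → ℝ → Fin 4 → ℝ)
    (hC : ∀ s t w, C s t w =
      γ s + a₁ s t w • F₁ s + a₂ s t w • F₂ s + a₃ s t w • F₃ s + a₄ s t w • F₄ s)
    (hsphere : ∀ s t w, mink (C s t w - γ s) (C s t w - γ s) = lam * (r s) ^ 2)
    (horth : ∀ s t w, mink (C s t w - γ s) (deriv (fun x => C x t w) s) = 0) :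
    ∀ s t w, a₃ s t w = -(lam * r s * deriv r s) ∧
      (a₂ s t w) ^ 2 + (a₄ s t w) ^ 2 =
        lam * r s * (r s + 2 * a₁ s t w * deriv r s) := by
  intro s t w
  -- sphere condition in coefficients, at every point x
  have hφ : ∀ x, a₂ x t w ^ 2 + a₄ x t w ^ 2 + 2 * a₁ x t w * a₃ x t w
      = lam * r x ^ 2 := by
    intro x
    have hE : C x t w - γ x =
        a₁ x t w • F₁ x + a₂ x t w • F₂ x + a₃ x t w • F₃ x + a₄ x t w • F₄ x := by
      rw [hC]; abel
    have hs := hsphere x t w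
    rw [hE] at hs
    have h21 : mink (F₂ x) (F₁ x) = 0 := by rw [mink_comm]; exact h12 x
    have h31 : mink (F₃ x) (F₁ x) = 1 := by rw [mink_comm]; exact h13 x
    have h41 : mink (F₄ x) (F₁ x) = 0 := by rw [mink_comm]; exact h14 x
    have h32 : mink (F₃ x) (F₂ x) = 0 := by rw [mink_comm]; exact h23 x
    have h42 : mink (F₄ x) (F₂ x) = 0 := by rw [mink_comm]; exact h24 x
    have h43 : mink (F₄ x) (F₃ x) = 0 := by rw [mink_comm]; exact h34 x
    simp only [mink_add_left, mink_add_right, mink_smul_left, mink_smul_right,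
      h11 x, h22 x, h33 x, h44 x, h12 x, h13 x, h14 x, h23 x, h24 x, h34 x,
      h21, h31, h41, h32, h42, h43] at hs
    linear_combination hs
  -- differentiability data at s
  have hA1 := ((ha₁ t w) s).hasDerivAt
  have hA2 := ((ha₂ t w) s).hasDerivAt
  have hA3 := ((ha₃ t w) s).hasDerivAt
  have hA4 := ((ha₄ t w) s).hasDerivAt
  have hγd : HasDerivAt γ (F₁ s) s := by
    have h := ((hγ.differentiable (by simp)) s).hasDerivAt
    rwa [hγ' s] at h
  have hF1d : HasDerivAt F₁ (k₁ s • F₂ s) s := by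
    have h := ((hF₁.differentiable (by simp)) s).hasDerivAt
    rwa [hF₁' s] at h
  have hF2d : HasDerivAt F₂ (k₂ s • F₁ s - k₁ s • F₃ s) s := by
    have h := ((hF₂.differentiable (by simp)) s).hasDerivAt
    rwa [hF₂' s] at h
  have hF3d : HasDerivAt F₃ (-(k₂ s • F₂ s) + k₃ s • F₄ s) s := by
    have h := ((hF₃.differentiable (by simp)) s).hasDerivAt
    rwa [hF₃' s] at h
  have hF4d : HasDerivAt F₄ (-(k₃ s • F₁ s)) s := by
    have h := ((hF₄.differentiable (by simp)) s).hasDerivAt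
    rwa [hF₄' s] at h
  -- derivative of C in s
  have hCf : (fun x => C x t w) = fun x =>
      γ x + a₁ x t w • F₁ x + a₂ x t w • F₂ x + a₃ x t w • F₃ x + a₄ x t w • F₄ x :=
    funext fun x => hC x t w
  have hd : HasDerivAt (fun x =>
      γ x + a₁ x t w • F₁ x + a₂ x t w • F₂ x + a₃ x t w • F₃ x + a₄ x t w • F₄ x)
      (F₁ s
        + (a₁ s t w • (k₁ s • F₂ s) + deriv (fun x => a₁ x t w) s • F₁ s)
        + (a₂ s t w • (k₂ s • F₁ s - k₁ s • F₃ s) + deriv (fun x => a₂ x t w) s • F₂ s)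
        + (a₃ s t w • (-(k₂ s • F₂ s) + k₃ s • F₄ s) + deriv (fun x => a₃ x t w) s • F₃ s)
        + (a₄ s t w • (-(k₃ s • F₁ s)) + deriv (fun x => a₄ x t w) s • F₄ s)) s :=
    ((((hγd.add (hA1.smul hF1d)).add (hA2.smul hF2d)).add (hA3.smul hF3d)).add
      (hA4.smul hF4d))
  have hderivC : deriv (fun x => C x t w) s =
      F₁ s
        + (a₁ s t w • (k₁ s • F₂ s) + deriv (fun x => a₁ x t w) s • F₁ s)
        + (a₂ s t w • (k₂ s • F₁ s - k₁ s • F₃ s) + deriv (fun x => a₂ x t w) s • F₂ s)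
        + (a₃ s t w • (-(k₂ s • F₂ s) + k₃ s • F₄ s) + deriv (fun x => a₃ x t w) s • F₃ s)
        + (a₄ s t w • (-(k₃ s • F₁ s)) + deriv (fun x => a₄ x t w) s • F₄ s) := by
    rw [hCf]; exact hd.deriv
  -- derivative of the sphere identity
  have hrd : HasDerivAt r (deriv r s) s := ((hr.differentiable (by simp)) s).hasDerivAt
  have hL : HasDerivAt (fun x => a₂ x t w ^ 2 + a₄ x t w ^ 2 + 2 * a₁ x t w * a₃ x t w)
      ((2 * a₂ s t w ^ 1 * deriv (fun x => a₂ x t w) s)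
        + (2 * a₄ s t w ^ 1 * deriv (fun x => a₄ x t w) s)
        + (2 * deriv (fun x => a₁ x t w) s * a₃ s t w
            + 2 * a₁ s t w * deriv (fun x => a₃ x t w) s)) s := by
    exact ((hA2.pow 2).add (hA4.pow 2)).add ((hA1.const_mul 2).mul hA3)
  have hR : HasDerivAt (fun x => lam * r x ^ 2) (lam * (2 * r s ^ 1 * deriv r s)) s :=
    (hrd.pow 2).const_mul lam
  have heq : (fun x => a₂ x t w ^ 2 + a₄ x t w ^ 2 + 2 * a₁ x t w * a₃ x t w)
      = fun x => lam * r x ^ 2 := funext hφ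
  rw [heq] at hL
  have hstar := hL.unique hR
  -- orthogonality condition, expanded
  have hE : C s t w - γ s =
      a₁ s t w • F₁ s + a₂ s t w • F₂ s + a₃ s t w • F₃ s + a₄ s t w • F₄ s := by
    rw [hC]; abel
  have key := horth s t w
  rw [hderivC, hE] at key
  have h21 : mink (F₂ s) (F₁ s) = 0 := by rw [mink_comm]; exact h12 s
  have h31 : mink (F₃ s) (F₁ s) = 1 := by rw [mink_comm]; exact h13 s
  have h41 : mink (F₄ s) (F₁ s) = 0 := by rw [mink_comm]; exact h14 s
  have h32 : mink (F₃ s) (F₂ s) = 0 := by rw [mink_comm]; exact h23 s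
  have h42 : mink (F₄ s) (F₂ s) = 0 := by rw [mink_comm]; exact h24 s
  have h43 : mink (F₄ s) (F₃ s) = 0 := by rw [mink_comm]; exact h34 s
  simp only [mink_add_left, mink_add_right, mink_sub_left, mink_sub_right,
    mink_smul_left, mink_smul_right, mink_neg_left, mink_neg_right,
    h11 s, h22 s, h33 s, h44 s, h12 s, h13 s, h14 s, h23 s, h24 s, h34 s,
    h21, h31, h41, h32, h42, h43] at key
  have h3 : a₃ s t w = -(lam * r s * deriv r s) := by
    linear_combination key - (1/2) * hstar
  refine ⟨h3, ?_⟩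
  linear_combination hφ s - 2 * a₁ s t w * h3
end

section
/- Let γ, F₁, F₂, F₃, F₄ : ℝ → ℝ⁴ together with k₁, k₂, k₃ : ℝ → ℝ be a partially null Frenet apparatus in E₁⁴, let λ ∈ {−1, 1}, let r : ℝ → ℝ be a smooth function with r(s) > 0 for all s, and let a₁, a₂, a₃, a₄ : ℝ³ → ℝ be functions differentiable in the first variable. Define C(s,t,w) = γ(s) + a₁(s,t,w)F₁(s) + a₂(s,t,w)F₂(s) + a₃(s,t,w)F₃(s) + a₄(s,t,w)F₄(s). If for all (s,t,w) one has ⟨C(s,t,w) − γ(s), C(s,t,w) − γ(s)⟩ = λr(s)² and ⟨C(s,t,w) − γ(s), ∂C/∂s(s,t,w)⟩ = 0, then for all (s,t,w): a₁(s,t,w) = −λr(s)r′(s) and a₂(s,t,w)² + 2a₃(s,t,w)a₄(s,t,w) = λr(s)²(1 − λr′(s)²). -/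
/-- Canal hypersurfaces over a partially null center curve: the coefficients satisfy
`a₁ = -λ r r'` and `a₂² + 2a₃a₄ = λ r² (1 - λ r'²)`. -/
theorem partiallyNull_canal_coefficients
    (γ F₁ F₂ F₃ F₄ : ℝ → Fin 4 → ℝ) (k₁ k₂ k₃ : ℝ → ℝ)
    (hγ : ContDiff ℝ (⊤ : ℕ∞) γ) (hF₁ : ContDiff ℝ (⊤ : ℕ∞) F₁) (hF₂ : ContDiff ℝ (⊤ : ℕ∞) F₂)
    (hF₃ : ContDiff ℝ (⊤ : ℕ∞) F₃) (hF₄ : ContDiff ℝ (⊤ : ℕ∞) F₄)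
    (hk₁ : ContDiff ℝ (⊤ : ℕ∞) k₁) (hk₂ : ContDiff ℝ (⊤ : ℕ∞) k₂) (hk₃ : ContDiff ℝ (⊤ : ℕ∞) k₃)
    (hγ' : ∀ s, deriv γ s = F₁ s)
    (hF₁' : ∀ s, deriv F₁ s = k₁ s • F₂ s)
    (hF₂' : ∀ s, deriv F₂ s = -(k₁ s • F₁ s) + k₂ s • F₃ s)
    (hF₃' : ∀ s, deriv F₃ s = k₃ s • F₃ s)
    (hF₄' : ∀ s, deriv F₄ s = -(k₂ s • F₂ s) - k₃ s • F₄ s)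
    (h11 : ∀ s, mink (F₁ s) (F₁ s) = 1)
    (h22 : ∀ s, mink (F₂ s) (F₂ s) = 1)
    (h33 : ∀ s, mink (F₃ s) (F₃ s) = 0)
    (h44 : ∀ s, mink (F₄ s) (F₄ s) = 0)
    (h34 : ∀ s, mink (F₃ s) (F₄ s) = 1)
    (h12 : ∀ s, mink (F₁ s) (F₂ s) = 0)
    (h13 : ∀ s, mink (F₁ s) (F₃ s) = 0)
    (h14 : ∀ s, mink (F₁ s) (F₄ s) = 0)
    (h23 : ∀ s, mink (F₂ s) (F₃ s) = 0)
    (h24 : ∀ s, mink (F₂ s) (F₄ s) = 0)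
    (lam : ℝ) (hlam : lam = -1 ∨ lam = 1)
    (r : ℝ → ℝ) (hr : ContDiff ℝ (⊤ : ℕ∞) r) (hrpos : ∀ s, 0 < r s)
    (a₁ a₂ a₃ a₄ : ℝ → ℝ → ℝ → ℝ)
    (ha₁ : ∀ t w, Differentiable ℝ (fun s => a₁ s t w))
    (ha₂ : ∀ t w, Differentiable ℝ (fun s => a₂ s t w))
    (ha₃ : ∀ t w, Differentiable ℝ (fun s => a₃ s t w))
    (ha₄ : ∀ t w, Differentiable ℝ (fun s => a₄ s t w))
    (C : ℝ → ℝ → ℝ → Fin 4 → ℝ)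
    (hC : ∀ s t w, C s t w =
      γ s + a₁ s t w • F₁ s + a₂ s t w • F₂ s + a₃ s t w • F₃ s + a₄ s t w • F₄ s)
    (hsphere : ∀ s t w, mink (C s t w - γ s) (C s t w - γ s) = lam * (r s) ^ 2)
    (horth : ∀ s t w, mink (C s t w - γ s) (deriv (fun x => C x t w) s) = 0) :
    ∀ s t w, a₁ s t w = -(lam * r s * deriv r s) ∧
      (a₂ s t w) ^ 2 + 2 * a₃ s t w * a₄ s t w =
        lam * (r s) ^ 2 * (1 - lam * (deriv r s) ^ 2) := by

  intro s t w
  have hγd := hγ.differentiable (by simp)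
  have hF₁d := hF₁.differentiable (by simp)
  have hF₂d := hF₂.differentiable (by simp)
  have hF₃d := hF₃.differentiable (by simp)
  have hF₄d := hF₄.differentiable (by simp)
  have hrd := hr.differentiable (by simp)
  -- sphere equation, expanded in the frame, valid at every point
  have E1 : ∀ x, a₁ x t w * a₁ x t w + a₂ x t w * a₂ x t w
      + 2 * (a₃ x t w * a₄ x t w) = lam * (r x * r x) := by
    intro x
    have H := hsphere x t w
    rw [hC x t w] at H
    have m11 := h11 x; have m22 := h22 x; have m33 := h33 x; have m44 := h44 x
    have m34 := h34 x; have m12 := h12 x; have m13 := h13 x; have m14 := h14 x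
    have m23 := h23 x; have m24 := h24 x
    simp only [mink, Pi.add_apply, Pi.sub_apply, Pi.smul_apply, Pi.neg_apply,
      smul_eq_mul] at H m11 m22 m33 m44 m34 m12 m13 m14 m23 m24
    linear_combination H
      - (a₁ x t w * a₁ x t w) * m11 - (a₂ x t w * a₂ x t w) * m22
      - (a₃ x t w * a₃ x t w) * m33 - (a₄ x t w * a₄ x t w) * m44
      - (2 * a₁ x t w * a₂ x t w) * m12 - (2 * a₁ x t w * a₃ x t w) * m13
      - (2 * a₁ x t w * a₄ x t w) * m14 - (2 * a₂ x t w * a₃ x t w) * m23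
      - (2 * a₂ x t w * a₄ x t w) * m24 - (2 * a₃ x t w * a₄ x t w) * m34
  -- derivatives of the frame
  have e0 : HasDerivAt γ (F₁ s) s := by
    have := (hγd s).hasDerivAt; rwa [hγ' s] at this
  have e1 : HasDerivAt F₁ (k₁ s • F₂ s) s := by
    have := (hF₁d s).hasDerivAt; rwa [hF₁' s] at this
  have e2 : HasDerivAt F₂ (-(k₁ s • F₁ s) + k₂ s • F₃ s) s := by
    have := (hF₂d s).hasDerivAt; rwa [hF₂' s] at this
  have e3 : HasDerivAt F₃ (k₃ s • F₃ s) s := by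
    have := (hF₃d s).hasDerivAt; rwa [hF₃' s] at this
  have e4 : HasDerivAt F₄ (-(k₂ s • F₂ s) - k₃ s • F₄ s) s := by
    have := (hF₄d s).hasDerivAt; rwa [hF₄' s] at this
  have d1 : HasDerivAt (fun x => a₁ x t w) (deriv (fun x => a₁ x t w) s) s :=
    (ha₁ t w s).hasDerivAt
  have d2 : HasDerivAt (fun x => a₂ x t w) (deriv (fun x => a₂ x t w) s) s :=
    (ha₂ t w s).hasDerivAt
  have d3 : HasDerivAt (fun x => a₃ x t w) (deriv (fun x => a₃ x t w) s) s :=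
    (ha₃ t w s).hasDerivAt
  have d4 : HasDerivAt (fun x => a₄ x t w) (deriv (fun x => a₄ x t w) s) s :=
    (ha₄ t w s).hasDerivAt
  have hCfun : (fun x => C x t w) =
      fun x => γ x + a₁ x t w • F₁ x + a₂ x t w • F₂ x + a₃ x t w • F₃ x
        + a₄ x t w • F₄ x := funext fun x => hC x t w
  have hDeriv : HasDerivAt (fun x => γ x + a₁ x t w • F₁ x + a₂ x t w • F₂ x
      + a₃ x t w • F₃ x + a₄ x t w • F₄ x)
      (F₁ s + (a₁ s t w • (k₁ s • F₂ s) + deriv (fun x => a₁ x t w) s • F₁ s)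
      + (a₂ s t w • (-(k₁ s • F₁ s) + k₂ s • F₃ s) + deriv (fun x => a₂ x t w) s • F₂ s)
      + (a₃ s t w • (k₃ s • F₃ s) + deriv (fun x => a₃ x t w) s • F₃ s)
      + (a₄ s t w • (-(k₂ s • F₂ s) - k₃ s • F₄ s) + deriv (fun x => a₄ x t w) s • F₄ s)) s :=
    (((e0.add (d1.smul e1)).add (d2.smul e2)).add (d3.smul e3)).add (d4.smul e4)
  have hD : deriv (fun x => C x t w) s
      = F₁ s + (a₁ s t w • (k₁ s • F₂ s) + deriv (fun x => a₁ x t w) s • F₁ s)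
      + (a₂ s t w • (-(k₁ s • F₁ s) + k₂ s • F₃ s) + deriv (fun x => a₂ x t w) s • F₂ s)
      + (a₃ s t w • (k₃ s • F₃ s) + deriv (fun x => a₃ x t w) s • F₃ s)
      + (a₄ s t w • (-(k₂ s • F₂ s) - k₃ s • F₄ s) + deriv (fun x => a₄ x t w) s • F₄ s) := by
    rw [hCfun]; exact hDeriv.deriv
  -- orthogonality, expanded
  have E3 : a₁ s t w + (a₁ s t w * deriv (fun x => a₁ x t w) s
      + a₂ s t w * deriv (fun x => a₂ x t w) s
      + a₃ s t w * deriv (fun x => a₄ x t w) s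
      + a₄ s t w * deriv (fun x => a₃ x t w) s) = 0 := by
    have H := horth s t w
    rw [hC s t w, hD] at H
    have m11 := h11 s; have m22 := h22 s; have m33 := h33 s; have m44 := h44 s
    have m34 := h34 s; have m12 := h12 s; have m13 := h13 s; have m14 := h14 s
    have m23 := h23 s; have m24 := h24 s
    simp only [mink, Pi.add_apply, Pi.sub_apply, Pi.smul_apply, Pi.neg_apply,
      smul_eq_mul] at H m11 m22 m33 m44 m34 m12 m13 m14 m23 m24
    linear_combination H
      - (a₁ s t w * (1 + deriv (fun x => a₁ x t w) s - a₂ s t w * k₁ s)) * m11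
      - (a₂ s t w * (a₁ s t w * k₁ s + deriv (fun x => a₂ x t w) s - a₄ s t w * k₂ s)) * m22
      - (a₃ s t w * (a₂ s t w * k₂ s + a₃ s t w * k₃ s + deriv (fun x => a₃ x t w) s)) * m33
      - (a₄ s t w * (deriv (fun x => a₄ x t w) s - a₄ s t w * k₃ s)) * m44
      - (a₁ s t w * (a₁ s t w * k₁ s + deriv (fun x => a₂ x t w) s - a₄ s t w * k₂ s)
        + a₂ s t w * (1 + deriv (fun x => a₁ x t w) s - a₂ s t w * k₁ s)) * m12
      - (a₁ s t w * (a₂ s t w * k₂ s + a₃ s t w * k₃ s + deriv (fun x => a₃ x t w) s)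
        + a₃ s t w * (1 + deriv (fun x => a₁ x t w) s - a₂ s t w * k₁ s)) * m13
      - (a₁ s t w * (deriv (fun x => a₄ x t w) s - a₄ s t w * k₃ s)
        + a₄ s t w * (1 + deriv (fun x => a₁ x t w) s - a₂ s t w * k₁ s)) * m14
      - (a₂ s t w * (a₂ s t w * k₂ s + a₃ s t w * k₃ s + deriv (fun x => a₃ x t w) s)
        + a₃ s t w * (a₁ s t w * k₁ s + deriv (fun x => a₂ x t w) s - a₄ s t w * k₂ s)) * m23
      - (a₂ s t w * (deriv (fun x => a₄ x t w) s - a₄ s t w * k₃ s)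
        + a₄ s t w * (a₁ s t w * k₁ s + deriv (fun x => a₂ x t w) s - a₄ s t w * k₂ s)) * m24
      - (a₃ s t w * (deriv (fun x => a₄ x t w) s - a₄ s t w * k₃ s)
        + a₄ s t w * (a₂ s t w * k₂ s + a₃ s t w * k₃ s + deriv (fun x => a₃ x t w) s)) * m34
  -- differentiate the sphere equation
  have hφ : HasDerivAt (fun x => a₁ x t w * a₁ x t w + a₂ x t w * a₂ x t w
      + 2 * (a₃ x t w * a₄ x t w))
      ((deriv (fun x => a₁ x t w) s * a₁ s t w + a₁ s t w * deriv (fun x => a₁ x t w) s)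
      + (deriv (fun x => a₂ x t w) s * a₂ s t w + a₂ s t w * deriv (fun x => a₂ x t w) s)
      + 2 * (deriv (fun x => a₃ x t w) s * a₄ s t w + a₃ s t w * deriv (fun x => a₄ x t w) s)) s :=
    ((d1.mul d1).add (d2.mul d2)).add ((d3.mul d4).const_mul 2)
  have hψ : HasDerivAt (fun x => lam * (r x * r x))
      (lam * (deriv r s * r s + r s * deriv r s)) s :=
    ((hrd s).hasDerivAt.mul (hrd s).hasDerivAt).const_mul lam
  have E2 : (deriv (fun x => a₁ x t w) s * a₁ s t w + a₁ s t w * deriv (fun x => a₁ x t w) s)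
      + (deriv (fun x => a₂ x t w) s * a₂ s t w + a₂ s t w * deriv (fun x => a₂ x t w) s)
      + 2 * (deriv (fun x => a₃ x t w) s * a₄ s t w + a₃ s t w * deriv (fun x => a₄ x t w) s)
      = lam * (deriv r s * r s + r s * deriv r s) := by
    have h' := hφ
    simp only [E1] at h'
    exact h'.unique hψ
  have g1 : a₁ s t w = -(lam * r s * deriv r s) := by linear_combination E3 - E2 / 2
  refine ⟨g1, ?_⟩
  linear_combination (E1 s) + (lam * r s * deriv r s - a₁ s t w) * g1
end

section
/- Let C₁ be the pseudo null canal hypersurface in E₁⁴. Then for all (s,t,w): ⟨C₁(s,t,w) − γ(s), ∂C₁/∂s(s,t,w)⟩ = 0; that is, the radial vector C₁ − γ is Minkowski-orthogonal to the s-parameter velocity of C₁ (the envelope condition). -/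
/-- The radial vector `C₁ - γ` of the pseudo null canal hypersurface is
Minkowski-orthogonal to the `s`-parameter velocity of `C₁` (envelope condition). -/
theorem pseudoNull_canal_envelope_condition
    (γ F₁ F₂ F₃ F₄ : ℝ → Fin 4 → ℝ) (k₁ k₂ k₃ : ℝ → ℝ)
    (hγ : ContDiff ℝ (⊤ : ℕ∞) γ) (hF₁ : ContDiff ℝ (⊤ : ℕ∞) F₁) (hF₂ : ContDiff ℝ (⊤ : ℕ∞) F₂)
    (hF₃ : ContDiff ℝ (⊤ : ℕ∞) F₃) (hF₄ : ContDiff ℝ (⊤ : ℕ∞) F₄)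
    (hk₁ : ContDiff ℝ (⊤ : ℕ∞) k₁) (hk₂ : ContDiff ℝ (⊤ : ℕ∞) k₂) (hk₃ : ContDiff ℝ (⊤ : ℕ∞) k₃)
    (hγ' : ∀ s, deriv γ s = F₁ s)
    (hF₁' : ∀ s, deriv F₁ s = k₁ s • F₂ s)
    (hF₂' : ∀ s, deriv F₂ s = k₂ s • F₃ s)
    (hF₃' : ∀ s, deriv F₃ s = k₃ s • F₂ s - k₂ s • F₄ s)
    (hF₄' : ∀ s, deriv F₄ s = -(k₁ s • F₁ s) - k₃ s • F₃ s)
    (h11 : ∀ s, mink (F₁ s) (F₁ s) = 1)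
    (h33 : ∀ s, mink (F₃ s) (F₃ s) = 1)
    (h22 : ∀ s, mink (F₂ s) (F₂ s) = 0)
    (h44 : ∀ s, mink (F₄ s) (F₄ s) = 0)
    (h24 : ∀ s, mink (F₂ s) (F₄ s) = 1)
    (h12 : ∀ s, mink (F₁ s) (F₂ s) = 0)
    (h13 : ∀ s, mink (F₁ s) (F₃ s) = 0)
    (h14 : ∀ s, mink (F₁ s) (F₄ s) = 0)
    (h23 : ∀ s, mink (F₂ s) (F₃ s) = 0)
    (h34 : ∀ s, mink (F₃ s) (F₄ s) = 0)
    (r : ℝ → ℝ) (hr : ContDiff ℝ (⊤ : ℕ∞) r)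
    (hrpos : ∀ s, 0 < r s) (hr' : ∀ s, (deriv r s) ^ 2 < 1)
    (f g : ℝ → ℝ → ℝ)
    (hf : ContDiff ℝ (⊤ : ℕ∞) (Function.uncurry f)) (hg : ContDiff ℝ (⊤ : ℕ∞) (Function.uncurry g))
    (hgne : ∀ t w, g t w ≠ 0)
    (C₁ : ℝ → ℝ → ℝ → Fin 4 → ℝ)
    (hC₁ : ∀ s t w, C₁ s t w =
      γ s - (r s * deriv r s) • F₁ s +
        (r s * Real.sqrt (1 - (deriv r s) ^ 2)) •
          ((g t w * Real.sin (f t w)) • F₂ s + Real.cos (f t w) • F₃ s +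
            (Real.sin (f t w) / (2 * g t w)) • F₄ s)) :
    ∀ s t w, mink (C₁ s t w - γ s) (deriv (fun x => C₁ x t w) s) = 0 := by
  intro s t w
  -- differentiability of deriv r
  have hrinf : ContDiff ℝ ((⊤:ℕ∞):WithTop ℕ∞) r := hr.of_le (by simp)
  have hrd : Differentiable ℝ r ∧ ContDiff ℝ ((⊤:ℕ∞):WithTop ℕ∞) (deriv r) :=
    contDiff_infty_iff_deriv.mp hrinf
  have hr'd : DifferentiableAt ℝ (deriv r) s := (hrd.2.differentiable (by simp)) s
  set r' : ℝ → ℝ := deriv r with hr'def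
  set A : ℝ := g t w * Real.sin (f t w) with hA
  set B : ℝ := Real.cos (f t w) with hB
  set D : ℝ := Real.sin (f t w) / (2 * g t w) with hD
  -- HasDerivAt facts for the frame
  have dγ : HasDerivAt γ (F₁ s) s := by
    have := ((hγ.differentiable (by simp)) s).hasDerivAt
    rwa [hγ' s] at this
  have dF₁ : HasDerivAt F₁ (k₁ s • F₂ s) s := by
    have := ((hF₁.differentiable (by simp)) s).hasDerivAt
    rwa [hF₁' s] at this
  have dF₂ : HasDerivAt F₂ (k₂ s • F₃ s) s := by
    have := ((hF₂.differentiable (by simp)) s).hasDerivAt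
    rwa [hF₂' s] at this
  have dF₃ : HasDerivAt F₃ (k₃ s • F₂ s - k₂ s • F₄ s) s := by
    have := ((hF₃.differentiable (by simp)) s).hasDerivAt
    rwa [hF₃' s] at this
  have dF₄ : HasDerivAt F₄ (-(k₁ s • F₁ s) - k₃ s • F₃ s) s := by
    have := ((hF₄.differentiable (by simp)) s).hasDerivAt
    rwa [hF₄' s] at this
  have drr : HasDerivAt r (r' s) s := (hrd.1 s).hasDerivAt
  have dr' : HasDerivAt r' (deriv r' s) s := hr'd.hasDerivAt
  set r'' : ℝ := deriv r' s with hr''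
  -- a = r * r'
  have da : HasDerivAt (fun x => r x * r' x) (r' s * r' s + r s * r'') s := by
    exact (drr.mul dr').congr_deriv (by ring)
  -- u = 1 - r'^2
  have hupos : 0 < 1 - r' s ^ 2 := by have := hr' s; linarith
  have du : HasDerivAt (fun x => 1 - r' x ^ 2) (-(2 * r' s * r'')) s := by
    have : HasDerivAt (fun x => r' x ^ 2) (2 * r' s * r'') s := by
      have h := dr'.mul dr'
      simp only [pow_two]
      exact h.congr_deriv (by ring)
    exact ((hasDerivAt_const s (1:ℝ)).sub this).congr_deriv (by ring)
  have dsq : HasDerivAt (fun x => Real.sqrt (1 - r' x ^ 2))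
      ((-(2 * r' s * r'')) / (2 * Real.sqrt (1 - r' s ^ 2))) s :=
    du.sqrt (ne_of_gt hupos)
  set q : ℝ := Real.sqrt (1 - r' s ^ 2) with hq
  have hqpos : 0 < q := Real.sqrt_pos.mpr hupos
  set b' : ℝ := r' s * q + r s * ((-(2 * r' s * r'')) / (2 * q)) with hb'
  have db : HasDerivAt (fun x => r x * Real.sqrt (1 - r' x ^ 2)) b' s := by
    have := drr.mul dsq
    exact this
  -- the canal surface as a function of x
  set W : Fin 4 → ℝ := A • F₂ s + B • F₃ s + D • F₄ s with hW
  have dWf : HasDerivAt (fun x => A • F₂ x + B • F₃ x + D • F₄ x)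
      (A • (k₂ s • F₃ s) + B • (k₃ s • F₂ s - k₂ s • F₄ s) +
        D • (-(k₁ s • F₁ s) - k₃ s • F₃ s)) s :=
    ((dF₂.const_smul A).add (dF₃.const_smul B)).add (dF₄.const_smul D)
  have dC : HasDerivAt (fun x => C₁ x t w)
      (F₁ s - ((r' s * r' s + r s * r'') • F₁ s + (r s * r' s) • (k₁ s • F₂ s)) +
        ((r s * q) • (A • (k₂ s • F₃ s) + B • (k₃ s • F₂ s - k₂ s • F₄ s) +
          D • (-(k₁ s • F₁ s) - k₃ s • F₃ s)) + b' • W)) s := by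
    have h1 : HasDerivAt (fun x => (r x * r' x) • F₁ x)
        ((r s * r' s) • (k₁ s • F₂ s) + (r' s * r' s + r s * r'') • F₁ s) s := da.smul dF₁
    have h2 : HasDerivAt (fun x => (r x * Real.sqrt (1 - r' x ^ 2)) •
        (A • F₂ x + B • F₃ x + D • F₄ x))
        ((r s * q) • (A • (k₂ s • F₃ s) + B • (k₃ s • F₂ s - k₂ s • F₄ s) +
          D • (-(k₁ s • F₁ s) - k₃ s • F₃ s)) + b' • W) s := db.smul dWf
    have h3 := (dγ.sub h1).add h2
    have heq : (fun x => C₁ x t w) = fun x =>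
        γ x - (r x * r' x) • F₁ x + (r x * Real.sqrt (1 - r' x ^ 2)) •
          (A • F₂ x + B • F₃ x + D • F₄ x) := by
      funext x; rw [hC₁ x t w]
    rw [heq]
    exact h3.congr_deriv (by abel)
  have hV : C₁ s t w - γ s = (-(r s * r' s)) • F₁ s + (r s * q) • W := by
    rw [hC₁ s t w, hW, hq]
    module
  rw [dC.deriv, hV]
  -- key scalar identities
  have hbb' : (r s * q) * b' = r s * r' s - (r s * r' s) * (r' s * r' s + r s * r'') := by
    have hq2 : q ^ 2 = 1 - r' s ^ 2 := Real.sq_sqrt hupos.le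
    rw [hb']
    field_simp [hb', ne_of_gt hqpos]
    linear_combination (r s * r' s) * hq2
  have hABD : 2 * A * D + B ^ 2 = 1 := by
    have hsc := Real.sin_sq_add_cos_sq (f t w)
    rw [hA, hB, hD]
    field_simp [hA, hB, hD, hgne t w]
    linear_combination hsc
  simp only [mink_add_left, mink_add_right, mink_sub_left, mink_sub_right,
    mink_smul_left, mink_smul_right, mink_neg_left, mink_neg_right, hW]
  have h21 : mink (F₂ s) (F₁ s) = 0 := by rw [mink_comm]; exact h12 s
  have h31 : mink (F₃ s) (F₁ s) = 0 := by rw [mink_comm]; exact h13 s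
  have h41 : mink (F₄ s) (F₁ s) = 0 := by rw [mink_comm]; exact h14 s
  have h32 : mink (F₃ s) (F₂ s) = 0 := by rw [mink_comm]; exact h23 s
  have h42 : mink (F₄ s) (F₂ s) = 1 := by rw [mink_comm]; exact h24 s
  have h43 : mink (F₄ s) (F₃ s) = 0 := by rw [mink_comm]; exact h34 s
  simp only [h11 s, h22 s, h33 s, h44 s, h12 s, h13 s, h14 s, h23 s, h24 s, h34 s,
    h21, h31, h41, h32, h42, h43]
  have hq2 : Real.sqrt (1 - r' s ^ 2) ^ 2 = 1 - r' s ^ 2 := Real.sq_sqrt hupos.le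
  have hsc : Real.sin (f t w) ^ 2 + Real.cos (f t w) ^ 2 = 1 := Real.sin_sq_add_cos_sq (f t w)
  have hqne : Real.sqrt (1 - r' s ^ 2) ≠ 0 := ne_of_gt hqpos
  linear_combination (2 * A * D + B ^ 2) * hbb' + (r s * r' s * (1 - r' s * r' s - r s * r'')) * hABD
end

section
/- Let r, p, q, κ, u, v be real numbers with r > 0 and p² < 1, and write P = 1 − p², Q = 1 − p² − rq. Assume r√P·κu − 2Qv ≠ 0 and r√P·κu + 2Qv ≠ 0. Define K = ( −rPκ²u² + 4qQv² + 2√P(1 − p² − 2rq)κuv ) / ( r²( r√P·κu − 2Qv )² ) and H = ( 2rP^{3/2}κuv + 3r²Pκ²u² − 4Q(2 − 2p² − 3rq)v² ) / ( 3( −r³Pκ²u² + 4rQ²v² ) ). Then 3H − r²K + 2/r = 0. -/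
private lemma canal_div_helper (a b c d e : ℝ) (hb : b ≠ 0) (hd : d ≠ 0) (he : e ≠ 0)
    (h : 3 * (a * d * e) - c * b * e + 2 * (b * d) = 0) :
    3 * (a / b) - c / d + 2 / e = 0 := by
  field_simp
  linear_combination h

/-- The Gaussian curvature `K` and mean curvature `H` of the timelike canal
hypersurface `C₁` over a pseudo null curve satisfy `3H - r²K + 2/r = 0`. -/
theorem pseudoNull_canal_KH_relation_C1
    (r p q κ u v P Q K H : ℝ) (hr : 0 < r) (hp : p ^ 2 < 1)
    (hP : P = 1 - p ^ 2) (hQ : Q = 1 - p ^ 2 - r * q)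
    (h1 : r * Real.sqrt P * κ * u - 2 * Q * v ≠ 0)
    (h2 : r * Real.sqrt P * κ * u + 2 * Q * v ≠ 0)
    (hK : K = (-(r * P * κ ^ 2 * u ^ 2) + 4 * q * Q * v ^ 2 +
        2 * Real.sqrt P * (1 - p ^ 2 - 2 * r * q) * κ * u * v) /
      (r ^ 2 * (r * Real.sqrt P * κ * u - 2 * Q * v) ^ 2))
    (hH : H = (2 * r * P ^ ((3 : ℝ) / 2) * κ * u * v + 3 * r ^ 2 * P * κ ^ 2 * u ^ 2 -
        4 * Q * (2 - 2 * p ^ 2 - 3 * r * q) * v ^ 2) /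
      (3 * (-(r ^ 3 * P * κ ^ 2 * u ^ 2) + 4 * r * Q ^ 2 * v ^ 2))) :
    3 * H - r ^ 2 * K + 2 / r = 0 := by
  have hPpos : 0 < P := by rw [hP]; linarith
  set s := Real.sqrt P with hs
  have hs2 : s ^ 2 = P := Real.sq_sqrt hPpos.le
  have hs3 : P ^ ((3 : ℝ) / 2) = s ^ 3 := by
    rw [hs, Real.sqrt_eq_rpow, ← Real.rpow_natCast (P ^ ((1:ℝ)/2)) 3,
      ← Real.rpow_mul hPpos.le]
    norm_num
  clear_value s
  have hp2 : p ^ 2 = 1 - s ^ 2 := by rw [hs2, hP]; ring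
  subst hQ
  rw [hs3] at hH
  subst hK hH
  rw [← hs2]
  rw [hp2] at h1 h2 ⊢
  have hd2 : (-(r ^ 3 * s ^ 2 * κ ^ 2 * u ^ 2) +
      4 * r * (1 - (1 - s ^ 2) - r * q) ^ 2 * v ^ 2) ≠ 0 := by
    have h : (-(r ^ 3 * s ^ 2 * κ ^ 2 * u ^ 2) +
        4 * r * (1 - (1 - s ^ 2) - r * q) ^ 2 * v ^ 2) =
        -r * (r * s * κ * u - 2 * (1 - (1 - s ^ 2) - r * q) * v) *
          (r * s * κ * u + 2 * (1 - (1 - s ^ 2) - r * q) * v) := by ring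
    rw [h]
    exact mul_ne_zero (mul_ne_zero (by simpa using hr.ne') h1) h2
  have hd2' : (3 : ℝ) * (-(r ^ 3 * s ^ 2 * κ ^ 2 * u ^ 2) +
      4 * r * (1 - (1 - s ^ 2) - r * q) ^ 2 * v ^ 2) ≠ 0 :=
    mul_ne_zero (by norm_num) hd2
  have hd1 : r ^ 2 * (r * s * κ * u - 2 * (1 - (1 - s ^ 2) - r * q) * v) ^ 2 ≠ 0 :=
    mul_ne_zero (pow_ne_zero _ hr.ne') (pow_ne_zero _ h1)
  have := canal_div_helper
    (2 * r * s ^ 3 * κ * u * v + 3 * r ^ 2 * s ^ 2 * κ ^ 2 * u ^ 2 -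
      4 * (1 - (1 - s ^ 2) - r * q) * (2 - 2 * (1 - s ^ 2) - 3 * r * q) * v ^ 2)
    (3 * (-(r ^ 3 * s ^ 2 * κ ^ 2 * u ^ 2) + 4 * r * (1 - (1 - s ^ 2) - r * q) ^ 2 * v ^ 2))
    (r ^ 2 * ((-(r * s ^ 2 * κ ^ 2 * u ^ 2) + 4 * q * (1 - (1 - s ^ 2) - r * q) * v ^ 2 +
      2 * s * (1 - (1 - s ^ 2) - 2 * r * q) * κ * u * v)))
    (r ^ 2 * (r * s * κ * u - 2 * (1 - (1 - s ^ 2) - r * q) * v) ^ 2)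
    r hd2' hd1 hr.ne' (by ring)
  linarith [this, (by ring_nf :
    3 * ((2 * r * s ^ 3 * κ * u * v + 3 * r ^ 2 * s ^ 2 * κ ^ 2 * u ^ 2 -
      4 * (1 - (1 - s ^ 2) - r * q) * (2 - 2 * (1 - s ^ 2) - 3 * r * q) * v ^ 2) /
      (3 * (-(r ^ 3 * s ^ 2 * κ ^ 2 * u ^ 2) + 4 * r * (1 - (1 - s ^ 2) - r * q) ^ 2 * v ^ 2))) -
    (r ^ 2 * ((-(r * s ^ 2 * κ ^ 2 * u ^ 2) + 4 * q * (1 - (1 - s ^ 2) - r * q) * v ^ 2 +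
      2 * s * (1 - (1 - s ^ 2) - 2 * r * q) * κ * u * v))) /
      (r ^ 2 * (r * s * κ * u - 2 * (1 - (1 - s ^ 2) - r * q) * v) ^ 2) + 2 / r =
    3 * ((2 * r * s ^ 3 * κ * u * v + 3 * r ^ 2 * s ^ 2 * κ ^ 2 * u ^ 2 -
      4 * (1 - (1 - s ^ 2) - r * q) * (2 - 2 * (1 - s ^ 2) - 3 * r * q) * v ^ 2) /
      (3 * (-(r ^ 3 * s ^ 2 * κ ^ 2 * u ^ 2) + 4 * r * (1 - (1 - s ^ 2) - r * q) ^ 2 * v ^ 2))) -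
    r ^ 2 * ((-(r * s ^ 2 * κ ^ 2 * u ^ 2) + 4 * q * (1 - (1 - s ^ 2) - r * q) * v ^ 2 +
      2 * s * (1 - (1 - s ^ 2) - 2 * r * q) * κ * u * v) /
      (r ^ 2 * (r * s * κ * u - 2 * (1 - (1 - s ^ 2) - r * q) * v) ^ 2)) + 2 / r)]
end

section
/- Let a > 0 be a real constant and let r : ℝ → ℝ be twice differentiable with r(s) > 0, r′(s) ≠ 0, and r′(s)² = 1 − (a/r(s))^{4/3} for all s ∈ ℝ. Then 2 − 2r′(s)² − 3r(s)r″(s) = 0 for all s; consequently, if moreover 1 − r′(s)² − r(s)r″(s) ≠ 0, the mean curvature expression H = −(2 − 2r′(s)² − 3r(s)r″(s)) / ( 3r(s)(1 − r′(s)² − r(s)r″(s)) ) vanishes for all s. -/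
/-!
Differentiating `r'² = 1 - (a/r)^p` gives `2 r' r″ = p (a/r)^p r'/r`, and cancelling `r' ≠ 0`
leaves `2 r r″ = p (a/r)^p`. For `p = 4/3` this reads `3 r r″ = 2 (a/r)^{4/3} = 2 (1 - r'²)`,
so the numerator of `H` vanishes identically.
-/

theorem hasDerivAt_const_div_rpow {f : ℝ → ℝ} {f' a s : ℝ} (p : ℝ) (hf : HasDerivAt f f' s)
    (ha : a ≠ 0) (hfs : f s ≠ 0) :
    HasDerivAt (fun t => (a / f t) ^ p) (-(p * (a / f s) ^ p * f' / f s)) s := by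
  have hq : a / f s ≠ 0 := div_ne_zero ha hfs
  have hquot : HasDerivAt (fun t => a / f t) (-(a * f') / f s ^ 2) s := by
    simpa using (hasDerivAt_const s a).fun_div hf hfs
  convert hquot.rpow_const (p := p) (Or.inl hq) using 1
  rw [Real.rpow_sub_one hq]
  field_simp

theorem two_mul_mul_deriv_deriv_of_sq_deriv_eq {r : ℝ → ℝ} {a s : ℝ} (p : ℝ) (ha : a ≠ 0)
    (hr1 : DifferentiableAt ℝ r s) (hr2 : DifferentiableAt ℝ (deriv r) s) (hrs : r s ≠ 0)
    (hr's : deriv r s ≠ 0) (hode : ∀ t, deriv r t ^ 2 = 1 - (a / r t) ^ p) :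
    2 * r s * deriv (deriv r) s = p * (a / r s) ^ p := by
  have hsq : HasDerivAt (fun t => deriv r t ^ 2) (2 * deriv r s * deriv (deriv r) s) s := by
    simpa [mul_comm] using hr2.hasDerivAt.fun_pow 2
  have hrhs : HasDerivAt (fun t => deriv r t ^ 2) (p * (a / r s) ^ p * deriv r s / r s) s := by
    simpa [funext hode] using (hasDerivAt_const_div_rpow p hr1.hasDerivAt ha hrs).const_sub 1
  have key := hsq.unique hrhs
  field_simp at key -- cancels the factor `deriv r s ≠ 0`
  linear_combination key

/-- If the radius function satisfies `r'² = 1 - (a/r)^{4/3}` with `r' ≠ 0`, then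
`2 - 2r'² - 3rr″ = 0`, hence the mean curvature of the canal hypersurface `C₁` over a
pseudo null straight line vanishes (the hypersurface is minimal). -/
theorem pseudoNull_canal_minimal_radius
    (a : ℝ) (ha : 0 < a) (r : ℝ → ℝ)
    (hr1 : Differentiable ℝ r) (hr2 : Differentiable ℝ (deriv r))
    (hrpos : ∀ s, 0 < r s) (hr' : ∀ s, deriv r s ≠ 0)
    (hode : ∀ s, (deriv r s) ^ 2 = 1 - (a / r s) ^ ((4 : ℝ) / 3)) :
    ∀ s, 2 - 2 * (deriv r s) ^ 2 - 3 * r s * deriv (deriv r) s = 0 ∧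
      (1 - (deriv r s) ^ 2 - r s * deriv (deriv r) s ≠ 0 →
        -(2 - 2 * (deriv r s) ^ 2 - 3 * r s * deriv (deriv r) s) /
          (3 * r s * (1 - (deriv r s) ^ 2 - r s * deriv (deriv r) s)) = 0) := by
  intro s
  have hrr := two_mul_mul_deriv_deriv_of_sq_deriv_eq _ ha.ne' (hr1 s) (hr2 s) (hrpos s).ne'
    (hr' s) hode
  have hnum : 2 - 2 * (deriv r s) ^ 2 - 3 * r s * deriv (deriv r) s = 0 := by
    linear_combination -2 * hode s - (3 / 2) * hrr
  exact ⟨hnum, fun _ => by rw [hnum, neg_zero, zero_div]⟩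
end

section
/- Let r, p, q, κ, u, v be real numbers with r > 0 and p² < 1, and write P = 1 − p², Q = 1 − p² − rq, P̃ = 1 + p², Q̃ = 1 + p² + rq. (i) If Q − r√P·κu ≠ 0 and Q + r√P·κu ≠ 0, then, setting K₁ = ( −rPκ²u² + qQ + √P(1−p²−2rq)κu ) / ( r²(Q − r√P·κu)² ) and H₁ = ( rP^{3/2}κu + 3r²Pκ²u² − Q(2−2p²−3rq) ) / ( 3r( Q² − r²Pκ²u² ) ), one has 3H₁ − r²K₁ + 2/r = 0. (ii) If Q̃ − r√P̃·κv ≠ 0 and Q̃ + r√P̃·κv ≠ 0, then, setting K₅ = ( rP̃κ²v² + qQ̃ − √P̃(1+p²+2rq)κv ) / ( r²(Q̃ − r√P̃·κv)² ) and H₅ = ( rP̃^{3/2}κv + 3r²P̃κ²v² − Q̃(2+2p²+3rq) ) / ( 3r( r²P̃κ²v² − Q̃² ) ), one has 3H₅ − r²K₅ − 2/r = 0. -/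
lemma rpow_three_halves {x : ℝ} (hx : 0 < x) :
    x ^ ((3 : ℝ) / 2) = x * Real.sqrt x := by
  rw [show (3 : ℝ) / 2 = 1 + 1 / 2 by norm_num, Real.rpow_add hx, Real.rpow_one,
    Real.sqrt_eq_rpow]

/-- The Gaussian and mean curvatures of the canal hypersurfaces `C₁` and `C₅` over a
partially null curve satisfy `3H₁ - r²K₁ + 2/r = 0` and `3H₅ - r²K₅ - 2/r = 0`. -/
theorem partiallyNull_canal_KH_relations
    (r p q κ u v : ℝ) (hr : 0 < r) (hp : p ^ 2 < 1) :
    (((1 - p ^ 2 - r * q) - r * Real.sqrt (1 - p ^ 2) * κ * u ≠ 0 →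
      (1 - p ^ 2 - r * q) + r * Real.sqrt (1 - p ^ 2) * κ * u ≠ 0 →
      3 * ((r * (1 - p ^ 2) ^ ((3 : ℝ) / 2) * κ * u +
              3 * r ^ 2 * (1 - p ^ 2) * κ ^ 2 * u ^ 2 -
              (1 - p ^ 2 - r * q) * (2 - 2 * p ^ 2 - 3 * r * q)) /
            (3 * r * ((1 - p ^ 2 - r * q) ^ 2 -
              r ^ 2 * (1 - p ^ 2) * κ ^ 2 * u ^ 2))) -
        r ^ 2 * ((-(r * (1 - p ^ 2) * κ ^ 2 * u ^ 2) + q * (1 - p ^ 2 - r * q) +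
              Real.sqrt (1 - p ^ 2) * (1 - p ^ 2 - 2 * r * q) * κ * u) /
            (r ^ 2 * ((1 - p ^ 2 - r * q) -
              r * Real.sqrt (1 - p ^ 2) * κ * u) ^ 2)) +
        2 / r = 0) ∧
     ((1 + p ^ 2 + r * q) - r * Real.sqrt (1 + p ^ 2) * κ * v ≠ 0 →
      (1 + p ^ 2 + r * q) + r * Real.sqrt (1 + p ^ 2) * κ * v ≠ 0 →
      3 * ((r * (1 + p ^ 2) ^ ((3 : ℝ) / 2) * κ * v +
              3 * r ^ 2 * (1 + p ^ 2) * κ ^ 2 * v ^ 2 -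
              (1 + p ^ 2 + r * q) * (2 + 2 * p ^ 2 + 3 * r * q)) /
            (3 * r * (r ^ 2 * (1 + p ^ 2) * κ ^ 2 * v ^ 2 -
              (1 + p ^ 2 + r * q) ^ 2))) -
        r ^ 2 * ((r * (1 + p ^ 2) * κ ^ 2 * v ^ 2 + q * (1 + p ^ 2 + r * q) -
              Real.sqrt (1 + p ^ 2) * (1 + p ^ 2 + 2 * r * q) * κ * v) /
            (r ^ 2 * ((1 + p ^ 2 + r * q) -
              r * Real.sqrt (1 + p ^ 2) * κ * v) ^ 2)) -
        2 / r = 0)) := by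
  constructor
  · intro h1 h2
    have hP : (0 : ℝ) < 1 - p ^ 2 := by linarith
    rw [rpow_three_halves hP]
    set s := Real.sqrt (1 - p ^ 2) with hsd
    have hs : s ^ 2 = 1 - p ^ 2 := Real.sq_sqrt hP.le
    rw [← hs] at h1 h2 ⊢
    have hAB : (s ^ 2 - r * q) ^ 2 - r ^ 2 * s ^ 2 * κ ^ 2 * u ^ 2 ≠ 0 := by
      have : (s ^ 2 - r * q) ^ 2 - r ^ 2 * s ^ 2 * κ ^ 2 * u ^ 2 =
          ((s ^ 2 - r * q) - r * s * κ * u) * ((s ^ 2 - r * q) + r * s * κ * u) := by ring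
      rw [this]; exact mul_ne_zero h1 h2
    have hp2 : p ^ 2 = 1 - s ^ 2 := by linarith [hs]
    field_simp
    rw [hp2]; ring
  · intro h1 h2
    have hP : (0 : ℝ) < 1 + p ^ 2 := by positivity
    rw [rpow_three_halves hP]
    set s := Real.sqrt (1 + p ^ 2) with hsd
    have hs : s ^ 2 = 1 + p ^ 2 := Real.sq_sqrt hP.le
    rw [← hs] at h1 h2 ⊢
    have hAB : r ^ 2 * s ^ 2 * κ ^ 2 * v ^ 2 - (s ^ 2 + r * q) ^ 2 ≠ 0 := by
      have : r ^ 2 * s ^ 2 * κ ^ 2 * v ^ 2 - (s ^ 2 + r * q) ^ 2 =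
          -(((s ^ 2 + r * q) - r * s * κ * v) * ((s ^ 2 + r * q) + r * s * κ * v)) := by ring
      rw [this]; exact neg_ne_zero.mpr (mul_ne_zero h1 h2)
    have hp2 : p ^ 2 = s ^ 2 - 1 := by linarith [hs]
    field_simp
    rw [hp2]; ring
end

section
/- Let f : ℝ² → ℝ be a function such that the three functions (t,w) ↦ 1, (t,w) ↦ sinh(f(t,w)), and (t,w) ↦ sinh²(f(t,w)) are linearly independent over ℝ in the real vector space of functions ℝ² → ℝ. Let r, p, q, κ be real numbers with r > 0 and κ ≠ 0. Then it is not the case that for all (t,w) ∈ ℝ²: r(1+p²)κ²·sinh²(f(t,w)) + q(1+p²+rq) − √(1+p²)(1+p²+2rq)·κ·sinh(f(t,w)) = 0. (Consequently, the canal hypersurface C₅ formed as the envelope of pseudo hyperbolic hyperspheres whose centers lie on a partially null curve with first curvature k₁ ≠ 0 cannot be flat.) -/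
/-- If `1`, `sinh∘f` and `sinh²∘f` are linearly independent functions, then the numerator
of the Gaussian curvature of the canal hypersurface `C₅` over a partially null curve with
`k₁ ≠ 0` cannot vanish identically: `C₅` cannot be flat when `k₁ ≠ 0`. -/
theorem partiallyNull_canal_C5_not_flat
    (f : ℝ → ℝ → ℝ)
    (hind : LinearIndependent ℝ
      ![fun _ : ℝ × ℝ => (1 : ℝ),
        fun p : ℝ × ℝ => Real.sinh (f p.1 p.2),
        fun p : ℝ × ℝ => (Real.sinh (f p.1 p.2)) ^ 2])
    (r p q κ : ℝ) (hr : 0 < r) (hκ : κ ≠ 0) :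
    ¬ ∀ t w : ℝ,
      r * (1 + p ^ 2) * κ ^ 2 * (Real.sinh (f t w)) ^ 2 +
        q * (1 + p ^ 2 + r * q) -
        Real.sqrt (1 + p ^ 2) * (1 + p ^ 2 + 2 * r * q) * κ *
          Real.sinh (f t w) = 0 := by
  intro h
  have hzero : ∀ i, (![q * (1 + p ^ 2 + r * q),
      -(Real.sqrt (1 + p ^ 2) * (1 + p ^ 2 + 2 * r * q) * κ),
      r * (1 + p ^ 2) * κ ^ 2] : Fin 3 → ℝ) i = 0 := by
    apply Fintype.linearIndependent_iff.mp hind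
    funext x
    have hx := h x.1 x.2
    simp only [Fin.sum_univ_three, Matrix.cons_val_zero, Matrix.cons_val_one,
      Matrix.head_cons, Matrix.cons_val_two, Matrix.tail_cons,
      Pi.add_apply, Pi.smul_apply, smul_eq_mul, Pi.zero_apply]
    linarith
  have h2 := hzero 2
  simp only [Matrix.cons_val_two, Matrix.tail_cons, Matrix.head_cons] at h2
  have hp2 : (0 : ℝ) < 1 + p ^ 2 := by positivity
  have : r * (1 + p ^ 2) * κ ^ 2 ≠ 0 := by positivity
  exact this h2
end

section
/- Let γ, F₁, F₂, F₃, F₄ : ℝ → ℝ⁴ together with k₁, k₂, k₃ : ℝ → ℝ be a null Frenet apparatus in E₁⁴, let r > 0 be a real constant, and let a₁, a₂, a₃, a₄ : ℝ³ → ℝ be functions differentiable in the first variable. Define C(s,t,w) = γ(s) + a₁(s,t,w)F₁(s) + a₂(s,t,w)F₂(s) + a₃(s,t,w)F₃(s) + a₄(s,t,w)F₄(s). Then it is impossible that for all (s,t,w) both ⟨C(s,t,w) − γ(s), C(s,t,w) − γ(s)⟩ = −r² and ⟨C(s,t,w) − γ(s), ∂C/∂s(s,t,w)⟩ = 0 hold.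 (That is, there is no tubular hypersurface formed as the envelope of a family of pseudo hyperbolic hyperspheres of constant radius whose centers lie on a null curve in E₁⁴.) -/
lemma mink_eval (u₁ u₂ u₃ u₄ : Fin 4 → ℝ)
    (g22 : mink u₂ u₂ = 1) (g44 : mink u₄ u₄ = 1)
    (g11 : mink u₁ u₁ = 0) (g33 : mink u₃ u₃ = 0) (g13 : mink u₁ u₃ = 1)
    (g12 : mink u₁ u₂ = 0) (g14 : mink u₁ u₄ = 0) (g23 : mink u₂ u₃ = 0)
    (g24 : mink u₂ u₄ = 0) (g34 : mink u₃ u₄ = 0)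
    (p₁ p₂ p₃ p₄ q₁ q₂ q₃ q₄ : ℝ) :
    mink (p₁ • u₁ + p₂ • u₂ + p₃ • u₃ + p₄ • u₄)
         (q₁ • u₁ + q₂ • u₂ + q₃ • u₃ + q₄ • u₄)
      = p₂ * q₂ + p₄ * q₄ + p₁ * q₃ + p₃ * q₁ := by
  simp only [mink, Pi.add_apply, Pi.smul_apply, smul_eq_mul] at *
  linear_combination p₂*q₂*g22 + p₄*q₄*g44 + p₁*q₁*g11 + p₃*q₃*g33 +
    (p₁*q₃ + p₃*q₁)*g13 + (p₁*q₂ + p₂*q₁)*g12 + (p₁*q₄ + p₄*q₁)*g14 +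
    (p₂*q₃ + p₃*q₂)*g23 + (p₂*q₄ + p₄*q₂)*g24 + (p₃*q₄ + p₄*q₃)*g34

/-- There is no tubular hypersurface formed as the envelope of a family of pseudo
hyperbolic hyperspheres of constant radius whose centers lie on a null curve in `E₁⁴`. -/
theorem no_hyperbolic_tube_over_null_curve
    (γ F₁ F₂ F₃ F₄ : ℝ → Fin 4 → ℝ) (k₁ k₂ k₃ : ℝ → ℝ)
    (hγ : ContDiff ℝ (⊤ : ℕ∞) γ) (hF₁ : ContDiff ℝ (⊤ : ℕ∞) F₁) (hF₂ : ContDiff ℝ (⊤ : ℕ∞) F₂)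
    (hF₃ : ContDiff ℝ (⊤ : ℕ∞) F₃) (hF₄ : ContDiff ℝ (⊤ : ℕ∞) F₄)
    (hk₁ : ContDiff ℝ (⊤ : ℕ∞) k₁) (hk₂ : ContDiff ℝ (⊤ : ℕ∞) k₂) (hk₃ : ContDiff ℝ (⊤ : ℕ∞) k₃)
    (hγ' : ∀ s, deriv γ s = F₁ s)
    (hF₁' : ∀ s, deriv F₁ s = k₁ s • F₂ s)
    (hF₂' : ∀ s, deriv F₂ s = k₂ s • F₁ s - k₁ s • F₃ s)
    (hF₃' : ∀ s, deriv F₃ s = -(k₂ s • F₂ s) + k₃ s • F₄ s)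
    (hF₄' : ∀ s, deriv F₄ s = -(k₃ s • F₁ s))
    (h22 : ∀ s, mink (F₂ s) (F₂ s) = 1)
    (h44 : ∀ s, mink (F₄ s) (F₄ s) = 1)
    (h11 : ∀ s, mink (F₁ s) (F₁ s) = 0)
    (h33 : ∀ s, mink (F₃ s) (F₃ s) = 0)
    (h13 : ∀ s, mink (F₁ s) (F₃ s) = 1)
    (h12 : ∀ s, mink (F₁ s) (F₂ s) = 0)
    (h14 : ∀ s, mink (F₁ s) (F₄ s) = 0)
    (h23 : ∀ s, mink (F₂ s) (F₃ s) = 0)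
    (h24 : ∀ s, mink (F₂ s) (F₄ s) = 0)
    (h34 : ∀ s, mink (F₃ s) (F₄ s) = 0)
    (r : ℝ) (hr : 0 < r)
    (a₁ a₂ a₃ a₄ : ℝ → ℝ → ℝ → ℝ)
    (ha₁ : ∀ t w, Differentiable ℝ (fun s => a₁ s t w))
    (ha₂ : ∀ t w, Differentiable ℝ (fun s => a₂ s t w))
    (ha₃ : ∀ t w, Differentiable ℝ (fun s => a₃ s t w))
    (ha₄ : ∀ t w, Differentiable ℝ (fun s => a₄ s t w))
    (C : ℝ → ℝ → ℝ → Fin 4 → ℝ)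
    (hC : ∀ s t w, C s t w =
      γ s + a₁ s t w • F₁ s + a₂ s t w • F₂ s + a₃ s t w • F₃ s + a₄ s t w • F₄ s) :
    ¬ ((∀ s t w, mink (C s t w - γ s) (C s t w - γ s) = -(r ^ 2)) ∧
       (∀ s t w, mink (C s t w - γ s) (deriv (fun x => C x t w) s) = 0)) := by
  rintro ⟨hsph, hort⟩
  -- abbreviations at t = w = 0
  set b₁ : ℝ → ℝ := fun s => a₁ s 0 0 with hb₁
  set b₂ : ℝ → ℝ := fun s => a₂ s 0 0 with hb₂
  set b₃ : ℝ → ℝ := fun s => a₃ s 0 0 with hb₃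
  set b₄ : ℝ → ℝ := fun s => a₄ s 0 0 with hb₄
  have hΔ : ∀ s, C s 0 0 - γ s =
      b₁ s • F₁ s + b₂ s • F₂ s + b₃ s • F₃ s + b₄ s • F₄ s := by
    intro s; rw [hC]; abel
  -- the sphere equation
  have hsq : ∀ s, b₂ s * b₂ s + b₄ s * b₄ s + b₁ s * b₃ s + b₃ s * b₁ s = -(r ^ 2) := by
    intro s
    have := hsph s 0 0
    rw [hΔ s, mink_eval _ _ _ _ (h22 s) (h44 s) (h11 s) (h33 s) (h13 s) (h12 s)
      (h14 s) (h23 s) (h24 s) (h34 s)] at this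
    linarith
  have key : ∀ s, b₃ s = 0 := by
    intro s
    have d1 : HasDerivAt b₁ (deriv b₁ s) s := ((ha₁ 0 0) s).hasDerivAt
    have d2 : HasDerivAt b₂ (deriv b₂ s) s := ((ha₂ 0 0) s).hasDerivAt
    have d3 : HasDerivAt b₃ (deriv b₃ s) s := ((ha₃ 0 0) s).hasDerivAt
    have d4 : HasDerivAt b₄ (deriv b₄ s) s := ((ha₄ 0 0) s).hasDerivAt
    have dγ : HasDerivAt γ (F₁ s) s := by
      have := (hγ.differentiable (by simp) s).hasDerivAt
      rwa [hγ' s] at this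
    have dF₁ : HasDerivAt F₁ (k₁ s • F₂ s) s := by
      have := (hF₁.differentiable (by simp) s).hasDerivAt
      rwa [hF₁' s] at this
    have dF₂ : HasDerivAt F₂ (k₂ s • F₁ s - k₁ s • F₃ s) s := by
      have := (hF₂.differentiable (by simp) s).hasDerivAt
      rwa [hF₂' s] at this
    have dF₃ : HasDerivAt F₃ (-(k₂ s • F₂ s) + k₃ s • F₄ s) s := by
      have := (hF₃.differentiable (by simp) s).hasDerivAt
      rwa [hF₃' s] at this
    have dF₄ : HasDerivAt F₄ (-(k₃ s • F₁ s)) s := by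
      have := (hF₄.differentiable (by simp) s).hasDerivAt
      rwa [hF₄' s] at this
    -- derivative of s ↦ C s 0 0
    have dC : HasDerivAt (fun x => C x 0 0)
        ((1 + deriv b₁ s + b₂ s * k₂ s - b₄ s * k₃ s) • F₁ s +
         (b₁ s * k₁ s + deriv b₂ s - b₃ s * k₂ s) • F₂ s +
         (deriv b₃ s - b₂ s * k₁ s) • F₃ s +
         (b₃ s * k₃ s + deriv b₄ s) • F₄ s) s := by
      have h := ((((dγ.add (d1.smul dF₁)).add (d2.smul dF₂)).add
        (d3.smul dF₃)).add (d4.smul dF₄))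
      have heq : (fun x => C x 0 0) =
          (fun x => γ x + b₁ x • F₁ x + b₂ x • F₂ x + b₃ x • F₃ x + b₄ x • F₄ x) := by
        funext x; exact hC x 0 0
      rw [heq]
      refine h.congr_deriv ?_
      funext i
      simp [Pi.add_apply, Pi.sub_apply, Pi.smul_apply, smul_eq_mul]
      ring
    have horth := hort s 0 0
    rw [dC.deriv, hΔ s, mink_eval _ _ _ _ (h22 s) (h44 s) (h11 s) (h33 s) (h13 s) (h12 s)
      (h14 s) (h23 s) (h24 s) (h34 s)] at horth
    -- derivative of the constant sphere function
    have dsq : HasDerivAt (fun x => b₂ x * b₂ x + b₄ x * b₄ x + b₁ x * b₃ x + b₃ x * b₁ x)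
        (0 : ℝ) s := by
      have : (fun x => b₂ x * b₂ x + b₄ x * b₄ x + b₁ x * b₃ x + b₃ x * b₁ x)
          = fun _ : ℝ => -(r ^ 2) := funext fun x => hsq x
      rw [this]; exact hasDerivAt_const s _
    have dsq' : HasDerivAt (fun x => b₂ x * b₂ x + b₄ x * b₄ x + b₁ x * b₃ x + b₃ x * b₁ x)
        (deriv b₂ s * b₂ s + b₂ s * deriv b₂ s + (deriv b₄ s * b₄ s + b₄ s * deriv b₄ s) +
         (deriv b₁ s * b₃ s + b₁ s * deriv b₃ s) +
         (deriv b₃ s * b₁ s + b₃ s * deriv b₁ s)) s := by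
      exact (((d2.mul d2).add (d4.mul d4)).add (d1.mul d3)).add (d3.mul d1)
    have E1 := dsq.unique dsq'
    linear_combination horth + (1/2) * E1
  have h0 := hsq 0
  rw [key 0] at h0
  nlinarith [sq_nonneg (b₂ 0), sq_nonneg (b₄ 0), sq_nonneg r]
end

section
/- Let r > 0 be a real constant, let k₁ : ℝ → ℝ be differentiable, let f, g : ℝ² → ℝ be differentiable, and assume 2g(t,w) − r·k₁(s)·sin(f(t,w)) ≠ 0 for all (s,t,w). Define K, H : ℝ³ → ℝ by K(s,t,w) = k₁(s)sin(f(t,w)) / ( r²( 2g(t,w) − r k₁(s) sin(f(t,w)) ) ) and H(s,t,w) = ( 3r k₁(s) sin(f(t,w)) − 4g(t,w) ) / ( 3r( 2g(t,w) − r k₁(s) sin(f(t,w)) ) ). Then at every point (s,t,w): ∂H/∂s·∂K/∂t − ∂H/∂t·∂K/∂s = 0, ∂H/∂s·∂K/∂w − ∂H/∂w·∂K/∂s = 0, and ∂H/∂t·∂K/∂w − ∂H/∂w·∂K/∂t = 0. -/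
/-!
Where `2g - r k₁ sin f ≠ 0`, the mean curvature is an affine function of the Gaussian
curvature, `H = (r²/3) K - 2/(3r)`. So every partial derivative of `H` is `r²/3` times the
corresponding partial derivative of `K`, and each Jacobian `∂(H, K)` vanishes.
-/

section Affine

variable {𝕜 : Type*} [NontriviallyNormedField 𝕜]

theorem deriv_eq_const_mul_deriv_of_affine {φ ψ : 𝕜 → 𝕜} {c b : 𝕜}
    (h : ∀ y, φ y = c * ψ y + b) (x : 𝕜) : deriv φ x = c * deriv ψ x := by
  rw [funext h, deriv_add_const, deriv_const_mul_field]

theorem jacobians_eq_zero_of_affine {H K : 𝕜 → 𝕜 → 𝕜 → 𝕜} {c b : 𝕜}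
    (h : ∀ s t w, H s t w = c * K s t w + b) (s t w : 𝕜) :
    deriv (fun x => H x t w) s * deriv (fun x => K s x w) t -
        deriv (fun x => H s x w) t * deriv (fun x => K x t w) s = 0 ∧
      deriv (fun x => H x t w) s * deriv (fun x => K s t x) w -
        deriv (fun x => H s t x) w * deriv (fun x => K x t w) s = 0 ∧
      deriv (fun x => H s x w) t * deriv (fun x => K s t x) w -
        deriv (fun x => H s t x) w * deriv (fun x => K s x w) t = 0 := by
  have hs := deriv_eq_const_mul_deriv_of_affine (fun x => h x t w) s
  have ht := deriv_eq_const_mul_deriv_of_affine (fun x => h s x w) t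
  have hw := deriv_eq_const_mul_deriv_of_affine (fun x => h s t x) w
  refine ⟨?_, ?_, ?_⟩ <;> simp only [hs, ht, hw] <;> ring

end Affine

theorem tube_meanCurvature_eq_affine_gaussCurvature {r k σ g : ℝ} (hr : r ≠ 0)
    (hD : 2 * g - r * k * σ ≠ 0) :
    (3 * r * k * σ - 4 * g) / (3 * r * (2 * g - r * k * σ)) =
      r ^ 2 / 3 * (k * σ / (r ^ 2 * (2 * g - r * k * σ))) + -(2 / (3 * r)) := by
  -- `field_simp` only recognises the denominator in its own normal form `g * 2 - …`
  have hD' : g * 2 - r * k * σ ≠ 0 := by rwa [mul_comm]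
  field_simp
  ring

theorem pseudoNull_tube_Weingarten_general
    (r : ℝ) (hr : 0 < r) (k₁ : ℝ → ℝ)
    (f g : ℝ → ℝ → ℝ)
    (hden : ∀ s t w, 2 * g t w - r * k₁ s * Real.sin (f t w) ≠ 0)
    (K H : ℝ → ℝ → ℝ → ℝ)
    (hK : ∀ s t w, K s t w = k₁ s * Real.sin (f t w) /
      (r ^ 2 * (2 * g t w - r * k₁ s * Real.sin (f t w))))
    (hH : ∀ s t w, H s t w = (3 * r * k₁ s * Real.sin (f t w) - 4 * g t w) /
      (3 * r * (2 * g t w - r * k₁ s * Real.sin (f t w)))) :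
    ∀ s t w,
      deriv (fun x => H x t w) s * deriv (fun x => K s x w) t -
        deriv (fun x => H s x w) t * deriv (fun x => K x t w) s = 0 ∧
      deriv (fun x => H x t w) s * deriv (fun x => K s t x) w -
        deriv (fun x => H s t x) w * deriv (fun x => K x t w) s = 0 ∧
      deriv (fun x => H s x w) t * deriv (fun x => K s t x) w -
        deriv (fun x => H s t x) w * deriv (fun x => K s x w) t = 0 := by
  have affine : ∀ s t w, H s t w = r ^ 2 / 3 * K s t w + -(2 / (3 * r)) := fun s t w => by
    rw [hH, hK]
    exact tube_meanCurvature_eq_affine_gaussCurvature hr.ne' (hden s t w)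
  exact jacobians_eq_zero_of_affine affine

/-- The tubular hypersurface `T₁` over a pseudo null curve is Weingarten: the Jacobians
of `(H, K)` with respect to each pair of parameters vanish. -/
theorem pseudoNull_tube_Weingarten
    (r : ℝ) (hr : 0 < r) (k₁ : ℝ → ℝ) (hk₁ : Differentiable ℝ k₁)
    (f g : ℝ → ℝ → ℝ)
    (hf : Differentiable ℝ (Function.uncurry f))
    (hg : Differentiable ℝ (Function.uncurry g))
    (hden : ∀ s t w, 2 * g t w - r * k₁ s * Real.sin (f t w) ≠ 0)
    (K H : ℝ → ℝ → ℝ → ℝ)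
    (hK : ∀ s t w, K s t w = k₁ s * Real.sin (f t w) /
      (r ^ 2 * (2 * g t w - r * k₁ s * Real.sin (f t w))))
    (hH : ∀ s t w, H s t w = (3 * r * k₁ s * Real.sin (f t w) - 4 * g t w) /
      (3 * r * (2 * g t w - r * k₁ s * Real.sin (f t w)))) :
    ∀ s t w,
      deriv (fun x => H x t w) s * deriv (fun x => K s x w) t -
        deriv (fun x => H s x w) t * deriv (fun x => K x t w) s = 0 ∧
      deriv (fun x => H x t w) s * deriv (fun x => K s t x) w -
        deriv (fun x => H s t x) w * deriv (fun x => K x t w) s = 0 ∧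
      deriv (fun x => H s x w) t * deriv (fun x => K s t x) w -
        deriv (fun x => H s t x) w * deriv (fun x => K s x w) t = 0 :=
  pseudoNull_tube_Weingarten_general r hr k₁ f g hden K H hK hH
end

section
/- Let r > 0 be a real constant, let k₁ : ℝ → ℝ be differentiable, let f : ℝ² → ℝ be differentiable, and assume 1 − r·k₁(s)·cosh(f(t,w)) ≠ 0 for all (s,t,w). Define K, H : ℝ³ → ℝ by K(s,t,w) = k₁(s)cosh(f(t,w)) / ( r²( 1 − r k₁(s) cosh(f(t,w)) ) ) and H(s,t,w) = ( 3r k₁(s) cosh(f(t,w)) − 2 ) / ( 3r( 1 − r k₁(s) cosh(f(t,w)) ) ). Then at every point (s,t,w): ∂H/∂s·∂K/∂t − ∂H/∂t·∂K/∂s = 0, ∂H/∂s·∂K/∂w − ∂H/∂w·∂K/∂s = 0, and ∂H/∂t·∂K/∂w − ∂H/∂w·∂K/∂t = 0. -/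
/-!
Writing `u = k₁(s) cosh(f(t, w))`, both curvatures are rational functions of `u` alone, and in fact
`H = (r² / 3) K - 2 / (3r)`: the tube is a linear Weingarten hypersurface. Since `H` is an affine
function of `K`, every partial derivative of `H` is the same multiple of the corresponding partial
derivative of `K`, so all three Jacobians vanish.
-/

theorem partiallyNull_tube_mean_eq_affine_gauss {𝕜 : Type*} [Field 𝕜] [CharZero 𝕜] {r u : 𝕜}
    (h : 1 - r * u ≠ 0) :
    (3 * r * u - 2) / (3 * r * (1 - r * u)) =
      r ^ 2 / 3 * (u / (r ^ 2 * (1 - r * u))) + -(2 / (3 * r)) := by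
  rcases eq_or_ne r 0 with rfl | hr
  · simp
  · field_simp
    ring

theorem deriv_affine_mul_deriv_sub_eq_zero {𝕜 : Type*} [NontriviallyNormedField 𝕜]
    (a b : 𝕜) (g₁ g₂ : 𝕜 → 𝕜) (x y : 𝕜) :
    deriv (fun z => a * g₁ z + b) x * deriv g₂ y -
      deriv (fun z => a * g₂ z + b) y * deriv g₁ x = 0 := by
  simp only [deriv_add_const, deriv_const_mul_field']
  ring

theorem partiallyNull_tube_Weingarten_general
    (r : ℝ) (k₁ : ℝ → ℝ)
    (f : ℝ → ℝ → ℝ)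
    (hden : ∀ s t w, 1 - r * k₁ s * Real.cosh (f t w) ≠ 0)
    (K H : ℝ → ℝ → ℝ → ℝ)
    (hK : ∀ s t w, K s t w = k₁ s * Real.cosh (f t w) /
      (r ^ 2 * (1 - r * k₁ s * Real.cosh (f t w))))
    (hH : ∀ s t w, H s t w = (3 * r * k₁ s * Real.cosh (f t w) - 2) /
      (3 * r * (1 - r * k₁ s * Real.cosh (f t w)))) :
    ∀ s t w,
      deriv (fun x => H x t w) s * deriv (fun x => K s x w) t -
        deriv (fun x => H s x w) t * deriv (fun x => K x t w) s = 0 ∧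
      deriv (fun x => H x t w) s * deriv (fun x => K s t x) w -
        deriv (fun x => H s t x) w * deriv (fun x => K x t w) s = 0 ∧
      deriv (fun x => H s x w) t * deriv (fun x => K s t x) w -
        deriv (fun x => H s t x) w * deriv (fun x => K s x w) t = 0 := by
  have hHK : H = fun s t w => r ^ 2 / 3 * K s t w + -(2 / (3 * r)) := by
    funext s t w
    have hd := hden s t w
    rw [mul_assoc] at hd
    rw [hH, hK, mul_assoc, mul_assoc r, partiallyNull_tube_mean_eq_affine_gauss hd]
  subst hHK
  intro s t w
  exact ⟨deriv_affine_mul_deriv_sub_eq_zero _ _ _ _ _ _,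
    deriv_affine_mul_deriv_sub_eq_zero _ _ _ _ _ _,
    deriv_affine_mul_deriv_sub_eq_zero _ _ _ _ _ _⟩

/-- The tubular hypersurface `T₃` over a partially null curve is Weingarten: the
Jacobians of `(H, K)` with respect to each pair of parameters vanish. -/
theorem partiallyNull_tube_Weingarten
    (r : ℝ) (hr : 0 < r) (k₁ : ℝ → ℝ) (hk₁ : Differentiable ℝ k₁)
    (f : ℝ → ℝ → ℝ)
    (hf : Differentiable ℝ (Function.uncurry f))
    (hden : ∀ s t w, 1 - r * k₁ s * Real.cosh (f t w) ≠ 0)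
    (K H : ℝ → ℝ → ℝ → ℝ)
    (hK : ∀ s t w, K s t w = k₁ s * Real.cosh (f t w) /
      (r ^ 2 * (1 - r * k₁ s * Real.cosh (f t w))))
    (hH : ∀ s t w, H s t w = (3 * r * k₁ s * Real.cosh (f t w) - 2) /
      (3 * r * (1 - r * k₁ s * Real.cosh (f t w)))) :
    ∀ s t w,
      deriv (fun x => H x t w) s * deriv (fun x => K s x w) t -
        deriv (fun x => H s x w) t * deriv (fun x => K x t w) s = 0 ∧
      deriv (fun x => H x t w) s * deriv (fun x => K s t x) w -
        deriv (fun x => H s t x) w * deriv (fun x => K x t w) s = 0 ∧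
      deriv (fun x => H s x w) t * deriv (fun x => K s t x) w -
        deriv (fun x => H s t x) w * deriv (fun x => K s x w) t = 0 :=
  partiallyNull_tube_Weingarten_general r k₁ f hden K H hK hH
end
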